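/- arXiv:2405.10334 — 8 statements merged into one kernel-verified Lean document; each statement's English description precedes it below -/
import Mathlib

section
/- Let s > 0 and let ϱ : I → ℝ be a differentiable function on an open interval I ⊂ [0, t_c(s)) satisfying ρ_c(s) < ϱ(t) < ρ_m(s) and 2ϱ(t)²(s − h(ϱ(t))) = t for all t ∈ I. Then for all t ∈ I one has ϱ′(t) = ϱ(t) / (2(t − ϱ(t)^{γ+1})), and ϱ′(t) < 0; that is, the subsonic density branch is strictly decreasing in the squared momentum t. -/
open Set Real

/-- a differentiable subsonic density branch `ϱ` on an open interval
`I ⊆ [0, t_c(s))` satisfies `ϱ′(t) = ϱ(t)/(2(t − ϱ(t)^{γ+1}))` and `ϱ′(t) < 0`;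
i.e. the subsonic density branch is strictly decreasing in the squared momentum. -/
theorem stmt_4 (γ : ℝ) (hγ : 1 < γ)
    (h : ℝ → ℝ) (hh : ∀ ρ : ℝ, h ρ = ρ ^ (γ - 1) / (γ - 1))
    (s : ℝ) (hs : 0 < s)
    (ρc ρm tc : ℝ)
    (hρc : ρc = (2 * (γ - 1) / (γ + 1) * s) ^ (1 / (γ - 1)))
    (hρm : ρm = ((γ - 1) * s) ^ (1 / (γ - 1)))
    (htc : tc = 2 * ρc ^ 2 * (s - h ρc))
    (I : Set ℝ) (hIopen : IsOpen I) (hIconn : I.OrdConnected)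
    (hIsub : I ⊆ Ico 0 tc)
    (ϱ ϱ' : ℝ → ℝ)
    (hderiv : ∀ τ ∈ I, HasDerivAt ϱ (ϱ' τ) τ)
    (hbranch : ∀ τ ∈ I, ρc < ϱ τ ∧ ϱ τ < ρm ∧ 2 * (ϱ τ) ^ 2 * (s - h (ϱ τ)) = τ) :
    ∀ τ ∈ I, ϱ' τ = ϱ τ / (2 * (τ - (ϱ τ) ^ (γ + 1))) ∧ ϱ' τ < 0 := by
  intro τ hτ
  obtain ⟨hlo, hhi, heq⟩ := hbranch τ hτ
  set ρ := ϱ τ with hρdef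
  have hγ1 : (0:ℝ) < γ - 1 := by linarith
  have hbase : (0:ℝ) < 2 * (γ - 1) / (γ + 1) * s := by
    apply mul_pos (div_pos (by linarith) (by linarith)) hs
  have hρc_pos : 0 < ρc := by
    rw [hρc]; exact Real.rpow_pos_of_pos hbase _
  have hρpos : 0 < ρ := lt_trans hρc_pos hlo
  set A := ρ ^ (γ - 1) with hA
  have hApos : 0 < A := Real.rpow_pos_of_pos hρpos _
  have hρcA : ρc ^ (γ - 1) = 2 * (γ - 1) / (γ + 1) * s := by
    rw [hρc, ← Real.rpow_mul (le_of_lt hbase), one_div,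
      inv_mul_cancel₀ (ne_of_gt hγ1), Real.rpow_one]
  have hAgt : 2 * (γ - 1) / (γ + 1) * s < A := by
    rw [← hρcA]
    exact Real.rpow_lt_rpow (le_of_lt hρc_pos) hlo hγ1
  have heq' : 2 * ρ ^ 2 * (s - A / (γ - 1)) = τ := by
    rw [← heq, hh]
  have hpow : ρ ^ (γ + 1) = A * ρ ^ 2 := by
    have e : γ + 1 = (γ - 1) + 2 := by ring
    rw [e, Real.rpow_add hρpos, hA]
    norm_num
  have hρ2 : (0:ℝ) < ρ ^ 2 := by positivity
  have h1 : 2 * (γ - 1) * s < A * (γ + 1) := by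
    have hγ1' : (0:ℝ) < γ + 1 := by linarith
    rw [div_mul_eq_mul_div, div_lt_iff₀ hγ1'] at hAgt
    linarith
  have hkey : τ - ρ ^ (γ + 1) < 0 := by
    rw [hpow, ← heq']
    have e : 2 * ρ ^ 2 * (s - A / (γ - 1)) - A * ρ ^ 2
        = ρ ^ 2 * (2 * (γ - 1) * s - A * (γ + 1)) / (γ - 1) := by
      field_simp; ring
    rw [e]
    exact div_neg_of_neg_of_pos (mul_neg_of_pos_of_neg hρ2 (by linarith)) hγ1
  have hdne : 2 * (τ - ρ ^ (γ + 1)) ≠ 0 := ne_of_lt (by linarith)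
  have hg : HasDerivAt (fun x : ℝ => 2 * x ^ 2 * (s - x ^ (γ - 1) / (γ - 1)))
      (2 * (2 * ρ) * (s - A / (γ - 1)) + 2 * ρ ^ 2 * (-((γ - 1) * ρ ^ (γ - 1 - 1) / (γ - 1)))) ρ := by
    have h1' : HasDerivAt (fun x : ℝ => 2 * x ^ 2) (2 * (2 * ρ)) ρ := by
      simpa using (hasDerivAt_pow 2 ρ).const_mul 2
    have h2' : HasDerivAt (fun x : ℝ => x ^ (γ - 1)) ((γ - 1) * ρ ^ (γ - 1 - 1)) ρ :=
      Real.hasDerivAt_rpow_const (Or.inl (ne_of_gt hρpos))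
    exact h1'.mul ((h2'.div_const (γ - 1)).const_sub s)
  have hcomp : HasDerivAt (fun t => 2 * (ϱ t) ^ 2 * (s - (ϱ t) ^ (γ - 1) / (γ - 1)))
      ((2 * (2 * ρ) * (s - A / (γ - 1)) + 2 * ρ ^ 2 * (-((γ - 1) * ρ ^ (γ - 1 - 1) / (γ - 1)))) * ϱ' τ) τ :=
    hg.comp τ (hderiv τ hτ)
  have hid : HasDerivAt (fun t => 2 * (ϱ t) ^ 2 * (s - (ϱ t) ^ (γ - 1) / (γ - 1))) 1 τ := by
    have hev : (fun t => 2 * (ϱ t) ^ 2 * (s - (ϱ t) ^ (γ - 1) / (γ - 1))) =ᶠ[nhds τ] id := by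
      filter_upwards [hIopen.mem_nhds hτ] with t ht
      have := (hbranch t ht).2.2
      rw [hh] at this
      simpa using this
    exact (hasDerivAt_id τ).congr_of_eventuallyEq hev
  have huniq : (2 * (2 * ρ) * (s - A / (γ - 1)) + 2 * ρ ^ 2 * (-((γ - 1) * ρ ^ (γ - 1 - 1) / (γ - 1)))) * ϱ' τ = 1 :=
    hcomp.unique hid
  have hpow2 : ρ ^ (γ - 1 - 1) = A / ρ := by
    rw [hA, Real.rpow_sub hρpos, Real.rpow_one]
  rw [hpow2] at huniq
  have hcoef : 2 * (2 * ρ) * (s - A / (γ - 1)) + 2 * ρ ^ 2 * (-((γ - 1) * (A / ρ) / (γ - 1)))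
      = 2 * (τ - ρ ^ (γ + 1)) / ρ := by
    rw [hpow, ← heq']
    field_simp
    ring
  rw [hcoef, div_mul_eq_mul_div, div_eq_one_iff_eq (ne_of_gt hρpos)] at huniq
  have hval : ϱ' τ = ρ / (2 * (τ - ρ ^ (γ + 1))) := by
    rw [eq_div_iff hdne]
    linear_combination huniq
  exact ⟨hval, hval ▸ div_neg_of_pos_of_neg hρpos (by linarith)⟩
end

section
/- Let B : J → (0,∞) be a differentiable function on an open interval J, and let ϱ(t,z) be a function, differentiable in t and in z on an open subset U of {(t,z) : z ∈ J, 0 ≤ t < t_c(B(z))}, satisfying ρ_c(B(z)) < ϱ(t,z) < ρ_m(B(z)) and 2ϱ(t,z)²(B(z) − h(ϱ(t,z))) = t on U. Then on U one has ∂_z ϱ(t,z) = −2 ϱ(t,z)² (∂_t ϱ(t,z)) B′(z); equivalently, the function g = 1/ϱ satisfies g(t,z)² ∂_z g(t,z) = −2 B′(z) ∂_t g(t,z). -/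
open Set Real

/-- for the subsonic density branch `ϱ(t,z)` with Bernoulli function `B`,
one has `∂_z ϱ = −2ϱ² (∂_t ϱ) B′(z)`; equivalently, `g = 1/ϱ` satisfies
`g² ∂_z g = −2 B′(z) ∂_t g`. -/
theorem stmt_5 (γ : ℝ) (hγ : 1 < γ)
    (h : ℝ → ℝ) (hh : ∀ ρ : ℝ, h ρ = ρ ^ (γ - 1) / (γ - 1))
    (ρc ρm tc : ℝ → ℝ)
    (hρc : ∀ s : ℝ, ρc s = (2 * (γ - 1) / (γ + 1) * s) ^ (1 / (γ - 1)))
    (hρm : ∀ s : ℝ, ρm s = ((γ - 1) * s) ^ (1 / (γ - 1)))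
    (htc : ∀ s : ℝ, tc s = 2 * ρc s ^ 2 * (s - h (ρc s)))
    (a b : ℝ) (B B' : ℝ → ℝ)
    (hBpos : ∀ z ∈ Ioo a b, 0 < B z)
    (hB : ∀ z ∈ Ioo a b, HasDerivAt B (B' z) z)
    (U : Set (ℝ × ℝ)) (hUopen : IsOpen U)
    (hUsub : U ⊆ {p : ℝ × ℝ | p.2 ∈ Ioo a b ∧ 0 ≤ p.1 ∧ p.1 < tc (B p.2)})
    (ϱ ϱt ϱz : ℝ → ℝ → ℝ)
    (hdt : ∀ p ∈ U, HasDerivAt (fun τ => ϱ τ p.2) (ϱt p.1 p.2) p.1)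
    (hdz : ∀ p ∈ U, HasDerivAt (fun z => ϱ p.1 z) (ϱz p.1 p.2) p.2)
    (hbranch : ∀ p ∈ U, ρc (B p.2) < ϱ p.1 p.2 ∧ ϱ p.1 p.2 < ρm (B p.2) ∧
      2 * (ϱ p.1 p.2) ^ 2 * (B p.2 - h (ϱ p.1 p.2)) = p.1) :
    ∀ p ∈ U,
      ϱz p.1 p.2 = -2 * (ϱ p.1 p.2) ^ 2 * ϱt p.1 p.2 * B' p.2 ∧
      (∀ gt gz : ℝ,
        HasDerivAt (fun τ => (ϱ τ p.2)⁻¹) gt p.1 →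
        HasDerivAt (fun z => (ϱ p.1 z)⁻¹) gz p.2 →
        ((ϱ p.1 p.2)⁻¹) ^ 2 * gz = -2 * B' p.2 * gt) := by
  intro p hp
  obtain ⟨t, z⟩ := p
  obtain ⟨hz, ht0, htlt⟩ := hUsub hp
  simp only at hz ⊢
  have hBz := hBpos z hz
  have hγ1 : (0:ℝ) < γ - 1 := by linarith
  have hρpos : 0 < ϱ t z := by
    have h1 : 0 < 2 * (γ - 1) / (γ + 1) * B z :=
      mul_pos (div_pos (by linarith) (by linarith)) hBz
    have h2 : 0 < ρc (B z) := by rw [hρc]; exact Real.rpow_pos_of_pos h1 _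
    have := (hbranch (t, z) hp).1
    simp only at this
    linarith
  have hρne : ϱ t z ≠ 0 := ne_of_gt hρpos
  -- derivative of h
  have hH : HasDerivAt h ((ϱ t z) ^ (γ - 2)) (ϱ t z) := by
    have h1 : HasDerivAt (fun x : ℝ => x ^ (γ - 1)) ((γ - 1) * (ϱ t z) ^ (γ - 1 - 1)) (ϱ t z) :=
      Real.hasDerivAt_rpow_const (Or.inl hρne)
    have h2 := h1.div_const (γ - 1)
    have heq : (fun x : ℝ => x ^ (γ - 1) / (γ - 1)) = h := by
      funext x; rw [hh]
    rw [heq] at h2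
    refine h2.congr_deriv ?_
    rw [show γ - 1 - 1 = γ - 2 by ring]
    field_simp
  set ρ := ϱ t z with hρdef
  set D : ℝ := 4 * ρ * (B z - h ρ) - 2 * ρ ^ 2 * ρ ^ (γ - 2) with hD
  -- derivative of Φ r = 2 r^2 (B z - h r)
  have hΦ : HasDerivAt (fun r : ℝ => 2 * r ^ 2 * (B z - h r)) D ρ := by
    have h1 : HasDerivAt (fun r : ℝ => 2 * r ^ 2) (4 * ρ) ρ := by
      have h0 := ((hasDerivAt_pow 2 ρ).const_mul 2)
      exact h0.congr_deriv (by push_cast; ring)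
    have h2 : HasDerivAt (fun r : ℝ => B z - h r) (-(ρ ^ (γ - 2))) ρ := by
      exact ((hasDerivAt_const ρ (B z)).sub hH).congr_deriv (by ring)
    have := h1.mul h2
    exact this.congr_deriv (by rw [hD]; ring)
  -- t-direction identity
  have hslice : IsOpen {τ : ℝ | (τ, z) ∈ U} :=
    hUopen.preimage (Continuous.prodMk_left z)
  have hcompt : HasDerivAt (fun τ => 2 * (ϱ τ z) ^ 2 * (B z - h (ϱ τ z))) (D * ϱt t z) t :=
    by have := hΦ.comp t (hdt (t, z) hp); exact this
  have hev : (fun τ => 2 * (ϱ τ z) ^ 2 * (B z - h (ϱ τ z))) =ᶠ[nhds t] id := by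
    filter_upwards [hslice.mem_nhds hp] with τ hτ
    exact (hbranch (τ, z) hτ).2.2
  have hDt : D * ϱt t z = 1 := by
    have := (hcompt.congr_of_eventuallyEq hev.symm).unique (hasDerivAt_id t)
    simpa using this
  -- z-direction identity
  have hslicez : IsOpen {w : ℝ | (t, w) ∈ U} :=
    hUopen.preimage (Continuous.prodMk_right t)
  have hcompz : HasDerivAt (fun w => 2 * (ϱ t w) ^ 2 * (B w - h (ϱ t w)))
      (4 * ρ * ϱz t z * (B z - h ρ) + 2 * ρ ^ 2 * (B' z - ρ ^ (γ - 2) * ϱz t z)) z := by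
    have h1 : HasDerivAt (fun w => 2 * (ϱ t w) ^ 2) (4 * ρ * ϱz t z) z := by
      have := (((hdz (t, z) hp).pow 2).const_mul 2)
      exact this.congr_deriv (by simp [hρdef]; ring)
    have h2 : HasDerivAt (fun w => B w - h (ϱ t w)) (B' z - ρ ^ (γ - 2) * ϱz t z) z :=
      (hB z hz).sub (hH.comp z (hdz (t, z) hp))
    exact h1.mul h2
  have hevz : (fun w => 2 * (ϱ t w) ^ 2 * (B w - h (ϱ t w))) =ᶠ[nhds z] (fun _ => t) := by
    filter_upwards [hslicez.mem_nhds hp] with w hw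
    exact (hbranch (t, w) hw).2.2
  have hDz : 4 * ρ * ϱz t z * (B z - h ρ) + 2 * ρ ^ 2 * (B' z - ρ ^ (γ - 2) * ϱz t z) = 0 := by
    have := (hcompz.congr_of_eventuallyEq hevz.symm).unique (hasDerivAt_const z t)
    simpa using this
  have hDz' : D * ϱz t z = -2 * ρ ^ 2 * B' z := by
    rw [hD]; nlinarith [hDz]
  have key : ϱz t z = -2 * ρ ^ 2 * ϱt t z * B' z := by
    have : (D * ϱt t z) * ϱz t z = ϱt t z * (D * ϱz t z) := by ring
    rw [hDt, hDz'] at this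
    linarith [this]
  refine ⟨key, ?_⟩
  intro gt gz hgt hgz
  have hgt' : gt = -(ϱt t z) / ρ ^ 2 := hgt.unique ((hdt (t, z) hp).inv hρne)
  have hgz' : gz = -(ϱz t z) / ρ ^ 2 := hgz.unique ((hdz (t, z) hp).inv hρne)
  rw [hgt', hgz', key]
  field_simp
end

section
/- Let H̄ > 0 and let ū ∈ C¹([0,H̄]) be positive and twice differentiable on (0,H̄], satisfying lim_{y→0+} ū′(y)/y = 0 and 0 ≤ (1/y)(ū′(y)/y)′ < ∞ for y ∈ (0,H̄]. Let ρ̄ > 0, Q = ρ̄ ∫₀^{H̄} y ū(y) dy, let 𝔥(z) ∈ [0,H̄] be defined by ρ̄ ∫₀^{𝔥(z)} y ū(y) dy = z, and B(z) = ū(𝔥(z))²/2 + h(ρ̄). Set κ₀ = sup_{y∈(0,H̄]} |ū″(y)| + sup_{y∈(0,H̄]} |(1/y)(ū′(y)/y)′|. Then for all z ∈ (0,Q]: 0 ≤ B′(z) ≤ κ₀/ρ̄ and 0 ≤ B″(z) ≤ κ₀ / (ρ̄² · inf_{y∈[0,H̄]} ū(y)). -/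
open Set MeasureTheory Filter Topology

/-!
`𝔥` inverts the flux `x ↦ ρ̄ ∫₀ˣ y ū(y) dy`, whose derivative is `ρ̄ x ū(x)`, so the chain rule
gives, at `y = 𝔥(z)` with `z ∈ (0, Q)`, `B′ = (ū′(y)/y)/ρ̄` and
`B″ = (1/y)(ū′(y)/y)′/(ρ̄² ū(y))`. Since `ū′(y)/y` is nondecreasing with limit `0` at `0+`, it is
nonnegative; since `ū′ → 0` at `0+`, the bound on `ū″` gives `|ū′(y)| ≤ y sup |ū″|`. This proves
both estimates on `(0, Q)`, and they extend to `z = Q` because, by the mean value theorem, the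
difference quotients of `B` and `B′` at `Q` are values of `B′` and `B″` on `(0, Q)`.
-/

section DerivOnIoc

variable {f f' : ℝ → ℝ} {a b : ℝ}

theorem hasDerivAt_of_hasDerivWithinAt_Ioc
    (hf : ∀ x ∈ Ioc a b, HasDerivWithinAt f (f' x) (Ioc a b) x) :
    ∀ x ∈ Ioo a b, HasDerivAt f (f' x) x :=
  fun x hx => (hf x (Ioo_subset_Ioc_self hx)).hasDerivAt (Ioc_mem_nhds hx.1 hx.2)

theorem mem_of_hasDerivWithinAt_Ioc_of_mem_Ioo {s : Set ℝ} (hab : a < b) (hs : IsClosed s)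
    (hf : ∀ x ∈ Ioc a b, HasDerivWithinAt f (f' x) (Ioc a b) x)
    (hf's : ∀ x ∈ Ioo a b, f' x ∈ s) : ∀ x ∈ Ioc a b, f' x ∈ s := by
  intro x hx
  rcases hx.2.lt_or_eq with hxb | rfl
  · exact hf's x ⟨hx.1, hxb⟩
  have hslope : Tendsto (slope f x) (𝓝[Ioo a x] x) (𝓝 (f' x)) := by
    simpa only [Ioc_sdiff_right] using hasDerivWithinAt_iff_tendsto_slope.1 (hf x hx)
  have := right_nhdsWithin_Ioo_neBot hab
  refine hs.mem_of_tendsto hslope (eventually_mem_nhdsWithin.mono fun y hy => ?_)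
  have hsub : Icc y x ⊆ Ioc a x := Icc_subset_Ioc_iff hy.2.le |>.2 ⟨hy.1, le_rfl⟩
  obtain ⟨c, hc, hc_eq⟩ := exists_hasDerivAt_eq_slope f f' hy.2
    (fun t ht => (hf t (hsub ht)).continuousWithinAt.mono hsub)
    (fun t ht => hasDerivAt_of_hasDerivWithinAt_Ioc hf t ⟨hy.1.trans ht.1, ht.2⟩)
  rw [slope_comm, slope_def_field, ← hc_eq]
  exact hf's c ⟨hy.1.trans hc.1, hc.2⟩

theorem le_of_tendsto_nhdsGT_of_hasDerivWithinAt_nonneg {l : ℝ}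
    (hf : ∀ x ∈ Ioc a b, HasDerivWithinAt f (f' x) (Ioc a b) x) (hf' : ∀ x ∈ Ioc a b, 0 ≤ f' x)
    (hlim : Tendsto f (𝓝[>] a) (𝓝 l)) : ∀ x ∈ Ioc a b, l ≤ f x := by
  have hmono : MonotoneOn f (Ioc a b) := by
    refine monotoneOn_of_hasDerivWithinAt_nonneg (f' := f') (convex_Ioc a b)
      (fun x hx => (hf x hx).continuousWithinAt) ?_ ?_ <;> rw [interior_Ioc]
    · exact fun x hx => (hasDerivAt_of_hasDerivWithinAt_Ioc hf x hx).hasDerivWithinAt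
    · exact fun x hx => hf' x (Ioo_subset_Ioc_self hx)
  intro x hx
  refine le_of_tendsto hlim ?_
  filter_upwards [Ioo_mem_nhdsGT hx.1] with y hy
  exact hmono ⟨hy.1, hy.2.le.trans hx.2⟩ hx hy.2.le

theorem abs_sub_le_of_tendsto_nhdsGT_of_abs_deriv_le {l C : ℝ}
    (hf : ∀ x ∈ Ioc a b, HasDerivWithinAt f (f' x) (Ioc a b) x) (hf' : ∀ x ∈ Ioc a b, |f' x| ≤ C)
    (hlim : Tendsto f (𝓝[>] a) (𝓝 l)) : ∀ x ∈ Ioc a b, |f x - l| ≤ C * (x - a) := by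
  intro x hx
  have hdist : Tendsto (fun y => C * (x - y)) (𝓝[>] a) (𝓝 (C * (x - a))) :=
    tendsto_nhdsWithin_of_tendsto_nhds ((by fun_prop : Continuous fun y => C * (x - y)).tendsto a)
  refine le_of_tendsto_of_tendsto (tendsto_const_nhds.sub hlim).abs hdist ?_
  filter_upwards [Ioc_mem_nhdsGT hx.1] with y hy
  have hy' : y ∈ Ioc a b := ⟨hy.1, hy.2.trans hx.2⟩
  simpa [abs_of_nonneg (sub_nonneg.2 hy.2)] using
    Convex.norm_image_sub_le_of_norm_hasDerivWithin_le hf hf' (convex_Ioc a b) hy' hx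

end DerivOnIoc

section Primitive

variable {g : ℝ → ℝ} {a b : ℝ}

theorem hasDerivAt_integral_of_continuousOn_Icc (hg : ContinuousOn g (Icc a b)) {x : ℝ}
    (hx : x ∈ Ioo a b) : HasDerivAt (fun y => ∫ t in a..y, g t) (g x) x :=
  intervalIntegral.integral_hasDerivAt_right
    (hg.mono (uIcc_subset_Icc (left_mem_Icc.2 (hx.1.trans hx.2).le)
      (Ioo_subset_Icc_self hx))).intervalIntegrable
    ((hg.mono Ioo_subset_Icc_self).stronglyMeasurableAtFilter isOpen_Ioo x hx)
    (hg.continuousAt (Icc_mem_nhds hx.1 hx.2))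

theorem strictMonoOn_integral_of_pos (hg : ContinuousOn g (Icc a b))
    (hpos : ∀ x ∈ Ioo a b, 0 < g x) : StrictMonoOn (fun x => ∫ t in a..x, g t) (Icc a b) := by
  intro x hx y hy hxy
  have hint : ∀ {c d}, c ∈ Icc a b → d ∈ Icc a b → IntervalIntegrable g volume c d :=
    fun hc hd => (hg.mono (uIcc_subset_Icc hc hd)).intervalIntegrable
  have ha : a ∈ Icc a b := left_mem_Icc.2 (hx.1.trans hx.2)
  rw [← sub_pos, intervalIntegral.integral_interval_sub_left (hint ha hy) (hint ha hx)]
  exact intervalIntegral.intervalIntegral_pos_of_pos_on (hint hx hy)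
    (fun t ht => hpos t ⟨hx.1.trans_lt ht.1, ht.2.trans_le hy.2⟩) hxy

end Primitive

/-- `Q = flux ρ̄ ū H̄`, and `𝔥` is the inverse of `flux ρ̄ ū : [0, H̄] → [0, Q]`. -/
noncomputable def flux (ρ : ℝ) (u : ℝ → ℝ) (x : ℝ) : ℝ := ρ * ∫ y in (0 : ℝ)..x, y * u y

section Flux

variable {ρ H : ℝ} {u : ℝ → ℝ}

theorem flux_zero : flux ρ u 0 = 0 := by simp [flux]

theorem strictMonoOn_flux (hρ : 0 < ρ) (hu : ContinuousOn u (Icc 0 H))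
    (hpos : ∀ y ∈ Ioo 0 H, 0 < u y) : StrictMonoOn (flux ρ u) (Icc 0 H) :=
  fun _ hx _ hy hxy => mul_lt_mul_of_pos_left (strictMonoOn_integral_of_pos
    (continuousOn_id.mul hu) (fun y hy => mul_pos hy.1 (hpos y hy)) hx hy hxy) hρ

theorem hasDerivAt_flux (hu : ContinuousOn u (Icc 0 H)) {x : ℝ} (hx : x ∈ Ioo 0 H) :
    HasDerivAt (flux ρ u) (ρ * (x * u x)) x :=
  (hasDerivAt_integral_of_continuousOn_Icc (continuousOn_id.mul hu) hx).const_mul ρ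

end Flux

section RightInverse

variable {F g : ℝ → ℝ} {a b c d : ℝ}

theorem mem_Ioo_of_rightInvOn (hFa : F a = c) (hFb : F b = d)
    (hg : MapsTo g (Icc c d) (Icc a b)) (hgF : RightInvOn g F (Icc c d)) {z : ℝ}
    (hz : z ∈ Ioo c d) : g z ∈ Ioo a b := by
  have hz' := Ioo_subset_Icc_self hz
  refine ⟨(hg hz').1.lt_of_ne ?_, (hg hz').2.lt_of_ne ?_⟩ <;> intro h
  · exact hz.1.ne (hFa ▸ h ▸ hgF hz')
  · exact hz.2.ne (hFb ▸ h ▸ hgF hz').symm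

theorem strictMonoOn_of_rightInvOn (hF : MonotoneOn F (Icc a b))
    (hg : MapsTo g (Icc c d) (Icc a b)) (hgF : RightInvOn g F (Icc c d)) :
    StrictMonoOn g (Icc c d) := by
  intro z hz w hw hzw
  by_contra! h
  have := hF (hg hw) (hg hz) h
  rw [hgF hz, hgF hw] at this
  exact hzw.not_ge this

theorem surjOn_of_rightInvOn (hF : StrictMonoOn F (Icc a b)) (hFa : F a = c) (hFb : F b = d)
    (hg : MapsTo g (Icc c d) (Icc a b)) (hgF : RightInvOn g F (Icc c d)) :
    SurjOn g (Icc c d) (Icc a b) := by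
  intro x hx
  have hFx : F x ∈ Icc c d :=
    ⟨hFa ▸ hF.monotoneOn (left_mem_Icc.2 (hx.1.trans hx.2)) hx hx.1,
      hFb ▸ hF.monotoneOn hx (right_mem_Icc.2 (hx.1.trans hx.2)) hx.2⟩
  exact ⟨F x, hFx, hF.injOn (hg hFx) hx (hgF hFx)⟩

theorem hasDerivAt_of_rightInvOn (hF : StrictMonoOn F (Icc a b)) (hFa : F a = c)
    (hFb : F b = d) (hg : MapsTo g (Icc c d) (Icc a b)) (hgF : RightInvOn g F (Icc c d))
    {z F' : ℝ} (hz : z ∈ Ioo c d) (hF' : HasDerivAt F F' (g z)) (hne : F' ≠ 0) :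
    HasDerivAt g F'⁻¹ z := by
  have hgz := mem_Ioo_of_rightInvOn hFa hFb hg hgF hz
  have hcont : ContinuousAt g z :=
    (strictMonoOn_of_rightInvOn hF.monotoneOn hg hgF).continuousAt_of_image_mem_nhds
      (Icc_mem_nhds hz.1 hz.2)
      (mem_of_superset (Icc_mem_nhds hgz.1 hgz.2) (surjOn_of_rightInvOn hF hFa hFb hg hgF))
  exact hF'.of_local_left_inverse hcont hne (eventually_of_mem (Icc_mem_nhds hz.1 hz.2) hgF)

end RightInverse

theorem hasDerivAt_half_sq_comp {u u' h : ℝ → ℝ} {ρ z : ℝ}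
    (hu : HasDerivAt u (u' (h z)) (h z)) (hh : HasDerivAt h (ρ * (h z * u (h z)))⁻¹ z)
    (hu0 : u (h z) ≠ 0) : HasDerivAt (fun w => u (h w) ^ 2 / 2) (u' (h z) / h z / ρ) z := by
  refine (((hu.comp z hh).fun_pow 2).div_const 2).congr_deriv ?_
  simp only [Function.comp_apply]
  field_simp
  ring

section InverseFlux

variable {ρ H Q : ℝ} {u u' w' 𝔥 : ℝ → ℝ}

theorem mem_Ioo_and_hasDerivAt_of_rightInvOn_flux (hρ : 0 < ρ) (hu : ContinuousOn u (Icc 0 H))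
    (hpos : ∀ x ∈ Ioo 0 H, 0 < u x) (hQ : Q = flux ρ u H) (h𝔥mem : MapsTo 𝔥 (Icc 0 Q) (Icc 0 H))
    (h𝔥 : RightInvOn 𝔥 (flux ρ u) (Icc 0 Q)) :
    ∀ z ∈ Ioo 0 Q, 𝔥 z ∈ Ioo 0 H ∧ HasDerivAt 𝔥 (ρ * (𝔥 z * u (𝔥 z)))⁻¹ z := by
  intro z hz
  have hx := mem_Ioo_of_rightInvOn flux_zero hQ.symm h𝔥mem h𝔥 hz
  exact ⟨hx, hasDerivAt_of_rightInvOn (strictMonoOn_flux hρ hu hpos) flux_zero hQ.symm h𝔥mem h𝔥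
    hz (hasDerivAt_flux hu hx) (mul_pos hρ (mul_pos hx.1 (hpos _ hx))).ne'⟩

theorem deriv_half_sq_comp_eq {B B' : ℝ → ℝ} {c : ℝ}
    (h𝔥 : ∀ z ∈ Ioo 0 Q, 𝔥 z ∈ Ioo 0 H ∧ HasDerivAt 𝔥 (ρ * (𝔥 z * u (𝔥 z)))⁻¹ z)
    (hu : ∀ x ∈ Ioo 0 H, HasDerivAt u (u' x) x) (hpos : ∀ x ∈ Ioo 0 H, 0 < u x)
    (hB : ∀ z, B z = u (𝔥 z) ^ 2 / 2 + c) (hB' : ∀ z ∈ Ioo 0 Q, HasDerivAt B (B' z) z) :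
    ∀ z ∈ Ioo 0 Q, B' z = u' (𝔥 z) / 𝔥 z / ρ := by
  intro z hz
  obtain ⟨hx, h𝔥'⟩ := h𝔥 z hz
  refine (hB' z hz).unique ?_
  rw [funext hB]
  exact (hasDerivAt_half_sq_comp (hu _ hx) h𝔥' (hpos _ hx).ne').add_const c

theorem deriv_div_id_comp_eq {B' B'' : ℝ → ℝ}
    (h𝔥 : ∀ z ∈ Ioo 0 Q, 𝔥 z ∈ Ioo 0 H ∧ HasDerivAt 𝔥 (ρ * (𝔥 z * u (𝔥 z)))⁻¹ z)
    (hw' : ∀ x ∈ Ioo 0 H, HasDerivAt (fun s => u' s / s) (w' x) x)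
    (hB' : ∀ z ∈ Ioo 0 Q, B' z = u' (𝔥 z) / 𝔥 z / ρ)
    (hB'' : ∀ z ∈ Ioo 0 Q, HasDerivAt B' (B'' z) z) :
    ∀ z ∈ Ioo 0 Q, B'' z = 1 / 𝔥 z * w' (𝔥 z) / (ρ ^ 2 * u (𝔥 z)) := by
  intro z hz
  obtain ⟨hx, h𝔥'⟩ := h𝔥 z hz
  refine (hB'' z hz).unique ?_
  refine ((((hw' _ hx).comp z h𝔥').div_const ρ).congr_of_eventuallyEq ?_).congr_deriv (by ring)
  filter_upwards [Ioo_mem_nhds hz.1 hz.2] with w hw using hB' w hw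

end InverseFlux

theorem div_le_of_tendsto_div_of_abs_deriv_le {v v' : ℝ → ℝ} {b C : ℝ}
    (hv : ∀ y ∈ Ioc 0 b, HasDerivWithinAt v (v' y) (Ioc 0 b) y)
    (hC : ∀ y ∈ Ioc 0 b, |v' y| ≤ C) (hlim : Tendsto (fun y => v y / y) (𝓝[>] 0) (𝓝 0)) :
    ∀ x ∈ Ioc 0 b, v x / x ≤ C := by
  have hv0 : Tendsto v (𝓝[>] 0) (𝓝 0) := by
    have := hlim.mul (tendsto_nhdsWithin_of_tendsto_nhds (tendsto_id (x := 𝓝 (0 : ℝ))))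
    rw [zero_mul] at this
    refine this.congr' ?_
    filter_upwards [self_mem_nhdsWithin] with y hy using div_mul_cancel₀ _ (ne_of_gt hy)
  intro x hx
  have hvx := abs_sub_le_of_tendsto_nhdsGT_of_abs_deriv_le hv hC hv0 x hx
  rw [sub_zero, sub_zero] at hvx
  exact (div_le_iff₀ hx.1).2 ((le_abs_self _).trans hvx)

theorem IsCompact.sInf_image_pos {s : Set ℝ} {f : ℝ → ℝ} (hs : IsCompact s) (hne : s.Nonempty)
    (hf : ContinuousOn f s) (hpos : ∀ x ∈ s, 0 < f x) : 0 < sInf (f '' s) := by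
  obtain ⟨x, hx, hfx⟩ := hs.exists_sInf_image_eq hne hf
  exact hfx ▸ hpos x hx

section Kappa

variable {H : ℝ} {u'' w' : ℝ → ℝ}

/-- The constant `κ₀` of the estimates. -/
noncomputable def kappa (H : ℝ) (u'' w' : ℝ → ℝ) : ℝ :=
  sSup ((fun y => |u'' y|) '' Ioc (0 : ℝ) H) + sSup ((fun y => 1 / y * w' y) '' Ioc (0 : ℝ) H)

theorem abs_le_kappa (hbdd1 : BddAbove ((fun y => |u'' y|) '' Ioc (0 : ℝ) H))
    (hbdd2 : BddAbove ((fun y => 1 / y * w' y) '' Ioc (0 : ℝ) H)) (hH : 0 < H)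
    (hsign : 0 ≤ 1 / H * w' H) : ∀ y ∈ Ioc 0 H, |u'' y| ≤ kappa H u'' w' :=
  fun _ hy => le_add_of_le_of_nonneg (le_csSup hbdd1 (mem_image_of_mem _ hy))
    (hsign.trans (le_csSup hbdd2 (mem_image_of_mem _ (right_mem_Ioc.2 hH))))

theorem one_div_mul_le_kappa (hbdd1 : BddAbove ((fun y => |u'' y|) '' Ioc (0 : ℝ) H))
    (hbdd2 : BddAbove ((fun y => 1 / y * w' y) '' Ioc (0 : ℝ) H)) (hH : 0 < H) :
    ∀ y ∈ Ioc 0 H, 1 / y * w' y ≤ kappa H u'' w' :=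
  fun _ hy => le_add_of_nonneg_of_le
    ((abs_nonneg _).trans (le_csSup hbdd1 (mem_image_of_mem _ (right_mem_Ioc.2 hH))))
    (le_csSup hbdd2 (mem_image_of_mem _ hy))

end Kappa

theorem stmt_7_general (γ : ℝ)
    (H ρb : ℝ) (hH : 0 < H) (hρb : 0 < ρb)
    (u u' u'' w' : ℝ → ℝ)
    (hucont : ContinuousOn u (Icc 0 H))
    (hu : ∀ y ∈ Icc (0 : ℝ) H, HasDerivWithinAt u (u' y) (Icc 0 H) y)
    (hupos : ∀ y ∈ Icc (0 : ℝ) H, 0 < u y)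
    (hu'' : ∀ y ∈ Ioc (0 : ℝ) H, HasDerivWithinAt u' (u'' y) (Ioc 0 H) y)
    (hw' : ∀ y ∈ Ioc (0 : ℝ) H, HasDerivWithinAt (fun s => u' s / s) (w' y) (Ioc 0 H) y)
    (hlim : Filter.Tendsto (fun y => u' y / y) (nhdsWithin 0 (Ioi 0)) (nhds 0))
    (hsign : ∀ y ∈ Ioc (0 : ℝ) H, 0 ≤ 1 / y * w' y)
    (hbdd1 : BddAbove ((fun y => |u'' y|) '' Ioc (0 : ℝ) H))
    (hbdd2 : BddAbove ((fun y => 1 / y * w' y) '' Ioc (0 : ℝ) H))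
    (κ : ℝ)
    (hκ : κ = sSup ((fun y => |u'' y|) '' Ioc (0 : ℝ) H)
        + sSup ((fun y => 1 / y * w' y) '' Ioc (0 : ℝ) H))
    (Q : ℝ) (hQ : Q = ρb * ∫ y in (0 : ℝ)..H, y * u y)
    (𝔥 : ℝ → ℝ)
    (h𝔥mem : ∀ z ∈ Icc (0 : ℝ) Q, 𝔥 z ∈ Icc (0 : ℝ) H)
    (h𝔥 : ∀ z ∈ Icc (0 : ℝ) Q, ρb * ∫ y in (0 : ℝ)..(𝔥 z), y * u y = z)
    (B : ℝ → ℝ) (hB : ∀ z : ℝ, B z = (u (𝔥 z)) ^ 2 / 2 + ρb ^ (γ - 1) / (γ - 1))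
    (B' B'' : ℝ → ℝ)
    (hB' : ∀ z ∈ Ioc (0 : ℝ) Q, HasDerivWithinAt B (B' z) (Ioc 0 Q) z)
    (hB'' : ∀ z ∈ Ioc (0 : ℝ) Q, HasDerivWithinAt B' (B'' z) (Ioc 0 Q) z) :
    ∀ z ∈ Ioc (0 : ℝ) Q,
      0 ≤ B' z ∧ B' z ≤ κ / ρb ∧
      0 ≤ B'' z ∧ B'' z ≤ κ / (ρb ^ 2 * sInf (u '' Icc (0 : ℝ) H)) := by
  intro z hz
  have hQ0 : 0 < Q := hz.1.trans_le hz.2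
  have hupos' : ∀ x ∈ Ioo 0 H, 0 < u x := fun x hx => hupos x (Ioo_subset_Icc_self hx)
  have h𝔥' := mem_Ioo_and_hasDerivAt_of_rightInvOn_flux hρb hucont hupos' hQ h𝔥mem h𝔥
  have hB'_eq := deriv_half_sq_comp_eq h𝔥'
    (fun x hx => (hu x (Ioo_subset_Icc_self hx)).hasDerivAt (Icc_mem_nhds hx.1 hx.2)) hupos' hB
    (hasDerivAt_of_hasDerivWithinAt_Ioc hB')
  have hB''_eq := deriv_div_id_comp_eq h𝔥' (hasDerivAt_of_hasDerivWithinAt_Ioc hw')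
    hB'_eq (hasDerivAt_of_hasDerivWithinAt_Ioc hB'')
  have hHH : H ∈ Ioc 0 H := right_mem_Ioc.2 hH
  have hκ₁ : ∀ y ∈ Ioc 0 H, |u'' y| ≤ κ := hκ ▸ abs_le_kappa hbdd1 hbdd2 hH (hsign H hHH)
  have hκ₂ : ∀ y ∈ Ioc 0 H, 1 / y * w' y ≤ κ := hκ ▸ one_div_mul_le_kappa hbdd1 hbdd2 hH
  have hm : 0 < sInf (u '' Icc 0 H) :=
    isCompact_Icc.sInf_image_pos (nonempty_Icc.2 hH.le) hucont hupos
  have hm_le : ∀ x ∈ Icc 0 H, sInf (u '' Icc 0 H) ≤ u x := fun x hx =>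
    csInf_le (isCompact_Icc.bddBelow_image hucont) (mem_image_of_mem u hx)
  have hv_nonneg := le_of_tendsto_nhdsGT_of_hasDerivWithinAt_nonneg hw'
    (fun y hy => nonneg_of_mul_nonneg_right (hsign y hy) (one_div_pos.2 hy.1)) hlim
  have hv_le := div_le_of_tendsto_div_of_abs_deriv_le hu'' hκ₁ hlim
  have hB'_mem := mem_of_hasDerivWithinAt_Ioc_of_mem_Ioo hQ0 isClosed_Icc hB' (fun z hz => by
    have hx := Ioo_subset_Ioc_self (h𝔥' z hz).1
    rw [hB'_eq z hz]
    exact ⟨div_nonneg (hv_nonneg _ hx) hρb.le, div_le_div_of_nonneg_right (hv_le _ hx) hρb.le⟩) z hz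
  have hB''_mem := mem_of_hasDerivWithinAt_Ioc_of_mem_Ioo hQ0 isClosed_Icc hB'' (fun z hz => by
    have hx := (h𝔥' z hz).1
    have hux := hupos' _ hx
    rw [hB''_eq z hz]
    exact ⟨div_nonneg (hsign _ (Ioo_subset_Ioc_self hx)) (by positivity),
      div_le_div₀ ((hsign H hHH).trans (hκ₂ H hHH)) (hκ₂ _ (Ioo_subset_Ioc_self hx))
        (by positivity)
        (mul_le_mul_of_nonneg_left (hm_le _ (Ioo_subset_Icc_self hx)) (by positivity))⟩) z hz
  exact ⟨hB'_mem.1, hB'_mem.2, hB''_mem.1, hB''_mem.2⟩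

/-- under the structure conditions on the upstream axial velocity `ū`
(`lim_{y→0+} ū′(y)/y = 0` and `0 ≤ (1/y)(ū′(y)/y)′ < ∞`), the Bernoulli function
`B(z) = ū(𝔥(z))²/2 + h(ρ̄)` satisfies, for `z ∈ (0,Q]`,
`0 ≤ B′(z) ≤ κ₀/ρ̄` and `0 ≤ B″(z) ≤ κ₀/(ρ̄² inf ū)`, where
`κ₀ = sup |ū″| + sup (1/y)(ū′(y)/y)′`. -/
theorem stmt_7 (γ : ℝ) (hγ : 1 < γ)
    (H ρb : ℝ) (hH : 0 < H) (hρb : 0 < ρb)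
    (u u' u'' w' : ℝ → ℝ)
    (hucont : ContinuousOn u (Icc 0 H))
    (hu : ∀ y ∈ Icc (0 : ℝ) H, HasDerivWithinAt u (u' y) (Icc 0 H) y)
    (hu'cont : ContinuousOn u' (Icc 0 H))
    (hupos : ∀ y ∈ Icc (0 : ℝ) H, 0 < u y)
    (hu'' : ∀ y ∈ Ioc (0 : ℝ) H, HasDerivWithinAt u' (u'' y) (Ioc 0 H) y)
    (hw' : ∀ y ∈ Ioc (0 : ℝ) H, HasDerivWithinAt (fun s => u' s / s) (w' y) (Ioc 0 H) y)
    (hlim : Filter.Tendsto (fun y => u' y / y) (nhdsWithin 0 (Ioi 0)) (nhds 0))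
    (hsign : ∀ y ∈ Ioc (0 : ℝ) H, 0 ≤ 1 / y * w' y)
    (hbdd1 : BddAbove ((fun y => |u'' y|) '' Ioc (0 : ℝ) H))
    (hbdd2 : BddAbove ((fun y => 1 / y * w' y) '' Ioc (0 : ℝ) H))
    (κ : ℝ)
    (hκ : κ = sSup ((fun y => |u'' y|) '' Ioc (0 : ℝ) H)
        + sSup ((fun y => 1 / y * w' y) '' Ioc (0 : ℝ) H))
    (Q : ℝ) (hQ : Q = ρb * ∫ y in (0 : ℝ)..H, y * u y)
    (𝔥 : ℝ → ℝ)
    (h𝔥mem : ∀ z ∈ Icc (0 : ℝ) Q, 𝔥 z ∈ Icc (0 : ℝ) H)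
    (h𝔥 : ∀ z ∈ Icc (0 : ℝ) Q, ρb * ∫ y in (0 : ℝ)..(𝔥 z), y * u y = z)
    (B : ℝ → ℝ) (hB : ∀ z : ℝ, B z = (u (𝔥 z)) ^ 2 / 2 + ρb ^ (γ - 1) / (γ - 1))
    (B' B'' : ℝ → ℝ)
    (hB' : ∀ z ∈ Ioc (0 : ℝ) Q, HasDerivWithinAt B (B' z) (Ioc 0 Q) z)
    (hB'' : ∀ z ∈ Ioc (0 : ℝ) Q, HasDerivWithinAt B' (B'' z) (Ioc 0 Q) z) :
    ∀ z ∈ Ioc (0 : ℝ) Q,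
      0 ≤ B' z ∧ B' z ≤ κ / ρb ∧
      0 ≤ B'' z ∧ B'' z ≤ κ / (ρb ^ 2 * sInf (u '' Icc (0 : ℝ) H)) :=
  stmt_7_general γ H ρb hH hρb u u' u'' w' hucont hu hupos hu'' hw' hlim hsign hbdd1 hbdd2 κ hκ Q hQ
    𝔥 h𝔥mem h𝔥 B hB B' B'' hB' hB''
end

section
/- For each s > 0, the function g(t,s) = 1/ϱ(t,s) is differentiable in t on [0, t_c(s)) and satisfies ∂_t g(t,s) = −g(t,s)² / ∂_ρ t(ϱ(t,s), s) > 0 for all t ∈ [0, t_c(s)); moreover ∂_t g(t,s) → +∞ as t → t_c(s)⁻. (Consequently the quasilinear stream-function equation is elliptic exactly in the subsonic region t < t_c(s) and becomes singular at the sonic state t = t_c(s).) -/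
open Set Real Filter

/-- for each `s > 0`, `g(t,s) = 1/ϱ(t,s)` is differentiable in `t` on
`[0, t_c(s))` with `∂_t g = −g²/∂_ρ t(ϱ,s) > 0` (where
`∂_ρ t(ρ,s) = 4ρ(s − (γ+1)/2·h(ρ))`), and `∂_t g(t,s) → +∞` as `t → t_c(s)⁻`. -/
theorem stmt_11 (γ : ℝ) (hγ : 1 < γ)
    (h : ℝ → ℝ) (hh : ∀ ρ : ℝ, h ρ = ρ ^ (γ - 1) / (γ - 1))
    (t : ℝ → ℝ → ℝ) (ht : ∀ ρ σ : ℝ, t ρ σ = 2 * ρ ^ 2 * (σ - h ρ))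
    (s : ℝ) (hs : 0 < s)
    (ρc ρm tc : ℝ)
    (hρc : ρc = (2 * (γ - 1) / (γ + 1) * s) ^ (1 / (γ - 1)))
    (hρm : ρm = ((γ - 1) * s) ^ (1 / (γ - 1)))
    (htc : tc = t ρc s)
    (ϱ : ℝ → ℝ)
    (hbranch : ∀ τ ∈ Ico (0 : ℝ) tc, ϱ τ ∈ Ioc ρc ρm ∧ t (ϱ τ) s = τ)
    (g : ℝ → ℝ) (hg : ∀ τ : ℝ, g τ = (ϱ τ)⁻¹) :
    ∃ g' : ℝ → ℝ,
      (∀ τ ∈ Ico (0 : ℝ) tc,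
        HasDerivWithinAt g (g' τ) (Ico 0 tc) τ ∧
        g' τ = -(g τ) ^ 2 / (4 * ϱ τ * (s - (γ + 1) / 2 * h (ϱ τ))) ∧
        0 < g' τ) ∧
      Tendsto g' (nhdsWithin tc (Ico 0 tc)) atTop := by
  have hc : 0 < γ - 1 := by linarith
  have hc' : γ - 1 ≠ 0 := hc.ne'
  have hγ1 : (0:ℝ) < γ + 1 := by linarith
  set c : ℝ := γ - 1 with hcdef
  clear_value c
  have hγc : γ + 1 = c + 2 := by rw [hcdef]; ring
  -- the momentum function and its ρ-derivative
  set F : ℝ → ℝ := fun ρ => 2 * ρ ^ 2 * (s - ρ ^ c / c) with hFdef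
  set D : ℝ → ℝ := fun ρ => 4 * ρ * (s - (γ + 1) / 2 * (ρ ^ c / c)) with hDdef
  have hFt : ∀ ρ : ℝ, t ρ s = F ρ := by intro ρ; rw [ht, hh]
  have hDh : ∀ ρ : ℝ, 4 * ρ * (s - (γ + 1) / 2 * h ρ) = D ρ := by intro ρ; rw [hh]
  have hbpos : 0 < 2 * c / (γ + 1) * s :=
    mul_pos (div_pos (mul_pos two_pos hc) hγ1) hs
  have hρc_pos : 0 < ρc := by rw [hρc]; exact Real.rpow_pos_of_pos hbpos _
  have hρc_c : ρc ^ c = 2 * c / (γ + 1) * s := by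
    rw [hρc, ← Real.rpow_mul hbpos.le, one_div_mul_cancel hc', Real.rpow_one]
  -- strict derivative of F
  have hderiv : ∀ ρ : ℝ, 0 < ρ → HasStrictDerivAt F (D ρ) ρ := by
    intro ρ hρ
    have h1 : HasStrictDerivAt (fun x : ℝ => x ^ c) (c * ρ ^ (c - 1)) ρ :=
      Real.hasStrictDerivAt_rpow_const_of_ne hρ.ne' c
    have h2 : HasStrictDerivAt (fun x : ℝ => 2 * x ^ 2) (2 * (2 * ρ)) ρ := by
      simpa using (hasStrictDerivAt_pow 2 ρ).const_mul (2:ℝ)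
    have h3 : HasStrictDerivAt (fun x : ℝ => s - x ^ c / c) (-(c * ρ ^ (c - 1) / c)) ρ :=
      (h1.div_const c).const_sub s
    have h4 := h2.mul h3
    have hpow : ρ ^ (c - 1) = ρ ^ c / ρ := by
      rw [Real.rpow_sub hρ, Real.rpow_one]
    refine h4.congr_deriv ?_
    simp only [hDdef]
    rw [hpow, hγc]
    field_simp
    ring
  -- D is negative beyond ρc
  have hDneg : ∀ ρ : ℝ, ρc < ρ → D ρ < 0 := by
    intro ρ hlt
    have hρ : 0 < ρ := hρc_pos.trans hlt
    have hpow : ρc ^ c < ρ ^ c := Real.rpow_lt_rpow hρc_pos.le hlt hc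
    rw [hρc_c] at hpow
    have hkey : s - (γ + 1) / 2 * (ρ ^ c / c) < 0 := by
      have e1 : (γ + 1) / 2 * ((2 * c / (γ + 1) * s) / c) = s := by
        field_simp
      have e2 : (γ + 1) / 2 * ((2 * c / (γ + 1) * s) / c) <
          (γ + 1) / 2 * (ρ ^ c / c) := by gcongr
      linarith
    simp only [hDdef]
    exact mul_neg_of_pos_of_neg (by linarith) hkey
  -- F is strictly decreasing on [ρc, ∞)
  have hanti : StrictAntiOn F (Ici ρc) := by
    apply strictAntiOn_of_deriv_neg (convex_Ici ρc)
    · intro x hx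
      exact (hderiv x (hρc_pos.trans_le hx)).hasDerivAt.continuousAt.continuousWithinAt
    · intro x hx
      rw [interior_Ici] at hx
      rw [(hderiv x (hρc_pos.trans hx)).hasDerivAt.deriv]
      exact hDneg x hx
  have htcF : tc = F ρc := by rw [htc, hFt]
  -- branch facts
  have hbr : ∀ τ ∈ Ico (0:ℝ) tc, ρc < ϱ τ ∧ ϱ τ ≤ ρm ∧ F (ϱ τ) = τ := by
    intro τ hτ
    obtain ⟨⟨h1, h2⟩, h3⟩ := hbranch τ hτ
    exact ⟨h1, h2, by rw [← hFt]; exact h3⟩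
  -- the candidate derivative
  refine ⟨fun τ => -(g τ) ^ 2 / (4 * ϱ τ * (s - (γ + 1) / 2 * h (ϱ τ))), ?_, ?_⟩
  · intro τ₀ hτ₀
    obtain ⟨hρ₀c, hρ₀m, hFρ₀⟩ := hbr τ₀ hτ₀
    have hρ₀pos : 0 < ϱ τ₀ := hρc_pos.trans hρ₀c
    have hsd := hderiv (ϱ τ₀) hρ₀pos
    have hne : D (ϱ τ₀) ≠ 0 := (hDneg _ hρ₀c).ne
    set ψ : ℝ → ℝ := hsd.localInverse F (D (ϱ τ₀)) (ϱ τ₀) hne with hψdef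
    have hψd : HasStrictDerivAt ψ (D (ϱ τ₀))⁻¹ τ₀ := by
      have := hsd.to_localInverse (hf' := hne)
      rwa [hFρ₀] at this
    have hψ0 : ψ τ₀ = ϱ τ₀ := by
      have := (hsd.hasStrictFDerivAt_equiv hne).localInverse_apply_image
      rwa [hFρ₀] at this
    have hri : ∀ᶠ y in nhds τ₀, F (ψ y) = y := by
      have := (hsd.hasStrictFDerivAt_equiv hne).eventually_right_inverse
      rwa [hFρ₀] at this
    have hgt : ∀ᶠ y in nhds τ₀, ρc < ψ y := by
      have hcont : Tendsto ψ (nhds τ₀) (nhds (ϱ τ₀)) := by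
        have := hψd.hasDerivAt.continuousAt
        rwa [ContinuousAt, hψ0] at this
      exact hcont.eventually (eventually_gt_nhds hρ₀c)
    have heq : ϱ =ᶠ[nhdsWithin τ₀ (Ico 0 tc)] ψ := by
      filter_upwards [(hri.and hgt).filter_mono nhdsWithin_le_nhds,
        self_mem_nhdsWithin] with τ hτ hmem
      obtain ⟨hρτc, _, hFρτ⟩ := hbr τ hmem
      exact hanti.injOn (le_of_lt hρτc) (le_of_lt hτ.2) (by rw [hFρτ, hτ.1])
    have hϱd : HasDerivWithinAt ϱ ((D (ϱ τ₀))⁻¹) (Ico 0 tc) τ₀ :=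
      (hψd.hasDerivAt.hasDerivWithinAt).congr_of_eventuallyEq heq (by rw [hψ0])
    have hgder : HasDerivWithinAt g (-(D (ϱ τ₀))⁻¹ / (ϱ τ₀) ^ 2) (Ico 0 tc) τ₀ := by
      have : HasDerivWithinAt (fun τ => (ϱ τ)⁻¹) (-(D (ϱ τ₀))⁻¹ / (ϱ τ₀) ^ 2)
          (Ico 0 tc) τ₀ := hϱd.inv hρ₀pos.ne'
      exact this.congr (fun τ _ => hg τ) (hg τ₀)
    have hgen : ∀ a b : ℝ, a ≠ 0 → b ≠ 0 → -(a⁻¹) ^ 2 / b = -b⁻¹ / a ^ 2 := by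
      intro a b ha hb; field_simp
    have hval : -(g τ₀) ^ 2 / (4 * ϱ τ₀ * (s - (γ + 1) / 2 * h (ϱ τ₀)))
        = -(D (ϱ τ₀))⁻¹ / (ϱ τ₀) ^ 2 := by
      rw [hDh, hg]
      exact hgen _ _ hρ₀pos.ne' hne
    refine ⟨?_, rfl, ?_⟩
    · show HasDerivWithinAt g
        (-(g τ₀) ^ 2 / (4 * ϱ τ₀ * (s - (γ + 1) / 2 * h (ϱ τ₀)))) (Ico 0 tc) τ₀
      rw [hval]; exact hgder
    · show (0:ℝ) < -(g τ₀) ^ 2 / (4 * ϱ τ₀ * (s - (γ + 1) / 2 * h (ϱ τ₀)))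
      rw [hval]
      have h5 : (D (ϱ τ₀))⁻¹ < 0 := inv_lt_zero.mpr (hDneg _ hρ₀c)
      exact div_pos (by linarith) (by positivity)
  · -- blow-up of the derivative at tc
    have htend_ϱ : Tendsto ϱ (nhdsWithin tc (Ico 0 tc)) (nhds ρc) := by
      rw [tendsto_order]
      constructor
      · intro a ha
        filter_upwards [self_mem_nhdsWithin] with τ hτ
        exact ha.trans (hbr τ hτ).1
      · intro b hb
        have hFb : F b < tc := by
          rw [htcF]; exact hanti (mem_Ici.mpr le_rfl) (le_of_lt hb) hb
        filter_upwards [eventually_nhdsWithin_of_eventually_nhds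
          (eventually_gt_nhds hFb), self_mem_nhdsWithin] with τ hτF hmem
        obtain ⟨hρτc, _, hFρτ⟩ := hbr τ hmem
        have : F b < F (ϱ τ) := by rw [hFρτ]; exact hτF
        exact (hanti.lt_iff_gt (le_of_lt hb) (le_of_lt hρτc)).mp this
    have hD0 : D ρc = 0 := by
      simp only [hDdef]
      rw [hρc_c]
      have e1 : (γ + 1) / 2 * ((2 * c / (γ + 1) * s) / c) = s := by
        field_simp
      rw [e1]; ring
    have hDc : ContinuousAt D ρc := by
      have h1 : ContinuousAt (fun ρ : ℝ => ρ ^ c) ρc :=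
        Real.continuousAt_rpow_const ρc c (Or.inl hρc_pos.ne')
      exact (continuousAt_const.mul continuousAt_id).mul
        (continuousAt_const.sub (continuousAt_const.mul (h1.div_const c)))
    have htend_D : Tendsto (fun τ => -(D (ϱ τ))) (nhdsWithin tc (Ico 0 tc)) (nhdsWithin 0 (Ioi 0)) := by
      apply tendsto_nhdsWithin_of_tendsto_nhds_of_eventually_within
      · have : Tendsto (fun τ => D (ϱ τ)) (nhdsWithin tc (Ico 0 tc)) (nhds 0) := by
          have := hDc.tendsto.comp htend_ϱ
          rwa [hD0] at this
        simpa using this.neg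
      · filter_upwards [self_mem_nhdsWithin] with τ hτ
        exact mem_Ioi.mpr (by linarith [hDneg _ (hbr τ hτ).1])
    have htend_g : Tendsto (fun τ => (g τ) ^ 2) (nhdsWithin tc (Ico 0 tc)) (nhds ((ρc⁻¹) ^ 2)) := by
      have h1 : Tendsto g (nhdsWithin tc (Ico 0 tc)) (nhds ρc⁻¹) :=
        ((htend_ϱ.inv₀ hρc_pos.ne')).congr (fun τ => (hg τ).symm)
      exact h1.pow 2
    have hmain : Tendsto (fun τ => (g τ) ^ 2 * (-(D (ϱ τ)))⁻¹)
        (nhdsWithin tc (Ico 0 tc)) atTop :=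
      Tendsto.pos_mul_atTop (by positivity) htend_g (tendsto_inv_nhdsGT_zero.comp htend_D)
    apply hmain.congr'
    filter_upwards [self_mem_nhdsWithin] with τ hτ
    rw [hDh, hg, inv_neg]
    ring
end

section
/- Let s > 0 and ε ∈ (0,1). If ρ ∈ [ρ_c(s), ρ_m(s)] satisfies t(ρ,s) ≤ (1 − ε/2)·t_c(s), then ∂_ρ t(ρ,s) ≤ −(γ+1)·ε·t_c(s)/(2ρ). Consequently, for 0 ≤ t ≤ (1 − ε/2)·t_c(s), the function g(t,s) = 1/ϱ(t,s) satisfies 0 < ∂_t g(t,s) ≤ 2 g(t,s) / ((γ+1)·ε·t_c(s)). -/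
open Set Real

/-- if `ρ ∈ [ρ_c(s), ρ_m(s)]` and `t(ρ,s) ≤ (1 − ε/2)t_c(s)`, then
`∂_ρ t(ρ,s) ≤ −(γ+1)ε t_c(s)/(2ρ)`; consequently, for `0 ≤ t ≤ (1 − ε/2)t_c(s)`, the
function `g(t,s) = 1/ϱ(t,s)` satisfies `0 < ∂_t g(t,s) ≤ 2g(t,s)/((γ+1)ε t_c(s))`. -/
theorem stmt_12 (γ : ℝ) (hγ : 1 < γ)
    (h : ℝ → ℝ) (hh : ∀ ρ : ℝ, h ρ = ρ ^ (γ - 1) / (γ - 1))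
    (t : ℝ → ℝ → ℝ) (ht : ∀ ρ σ : ℝ, t ρ σ = 2 * ρ ^ 2 * (σ - h ρ))
    (s ε : ℝ) (hs : 0 < s) (hε : ε ∈ Ioo (0 : ℝ) 1)
    (ρc ρm tc : ℝ)
    (hρc : ρc = (2 * (γ - 1) / (γ + 1) * s) ^ (1 / (γ - 1)))
    (hρm : ρm = ((γ - 1) * s) ^ (1 / (γ - 1)))
    (htc : tc = t ρc s)
    (ϱ g g' : ℝ → ℝ)
    (hbranch : ∀ τ ∈ Ico (0 : ℝ) tc, ϱ τ ∈ Ioc ρc ρm ∧ t (ϱ τ) s = τ)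
    (hg : ∀ τ : ℝ, g τ = (ϱ τ)⁻¹)
    (hg' : ∀ τ ∈ Ico (0 : ℝ) tc, HasDerivWithinAt g (g' τ) (Ico 0 tc) τ) :
    (∀ ρ ∈ Icc ρc ρm, t ρ s ≤ (1 - ε / 2) * tc →
      ∀ d : ℝ, HasDerivAt (fun r => t r s) d ρ → d ≤ -((γ + 1) * ε * tc) / (2 * ρ)) ∧
    (∀ τ : ℝ, 0 ≤ τ → τ ≤ (1 - ε / 2) * tc →
      0 < g' τ ∧ g' τ ≤ 2 * g τ / ((γ + 1) * ε * tc)) := by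
  obtain ⟨hε0, hε1⟩ := hε
  have hγ0 : (0:ℝ) < γ - 1 := by linarith
  have hγ1 : (0:ℝ) < γ + 1 := by linarith
  have hXpos : 0 < 2 * (γ - 1) / (γ + 1) * s := by positivity
  have hρc_pos : 0 < ρc := by rw [hρc]; positivity
  have hρc_pow : ρc ^ (γ - 1) = 2 * (γ - 1) / (γ + 1) * s := by
    rw [hρc, ← Real.rpow_mul hXpos.le, one_div_mul_cancel (ne_of_gt hγ0), Real.rpow_one]
  have htc_val : tc = 2 * ρc ^ 2 * s * (γ - 1) / (γ + 1) := by
    rw [htc, ht, hh, hρc_pow]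
    field_simp
    ring
  have htc_pos : 0 < tc := by rw [htc_val]; positivity
  set D : ℝ → ℝ := fun r => 4 * r * (s - r ^ (γ - 1) / (γ - 1)) - 2 * r ^ 2 * r ^ (γ - 1 - 1)
    with hDdef
  have hderiv : ∀ ρ : ℝ, 0 < ρ → HasDerivAt (fun r => t r s) (D ρ) ρ := by
    intro ρ hρ
    have h1 : HasDerivAt (fun r : ℝ => r ^ (γ - 1)) ((γ - 1) * ρ ^ (γ - 1 - 1)) ρ :=
      Real.hasDerivAt_rpow_const (Or.inl hρ.ne')
    have h2 : HasDerivAt (fun r : ℝ => s - r ^ (γ - 1) / (γ - 1))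
        (-((γ - 1) * ρ ^ (γ - 1 - 1) / (γ - 1))) ρ := by
      simpa using (h1.div_const (γ - 1)).const_sub s
    have h3 : HasDerivAt (fun r : ℝ => 2 * r ^ 2) (2 * (2 * ρ)) ρ := by
      have := (hasDerivAt_pow 2 ρ).const_mul (2:ℝ)
      simpa using this
    have h4 : HasDerivAt (fun r : ℝ => 2 * r ^ 2 * (s - r ^ (γ - 1) / (γ - 1))) _ ρ := h3.mul h2
    have heq : (fun r : ℝ => 2 * r ^ 2 * (s - r ^ (γ - 1) / (γ - 1))) = fun r => t r s := by
      funext r; rw [ht, hh]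
    rw [heq] at h4
    have e1 : (γ - 1) * ρ ^ (γ - 1 - 1) / (γ - 1) = ρ ^ (γ - 1 - 1) := by
      field_simp
    rw [e1] at h4
    convert h4 using 1
    ring
  have hkey : ∀ ρ, ρ ∈ Icc ρc ρm → t ρ s ≤ (1 - ε / 2) * tc →
      ρ * D ρ ≤ -((γ + 1) * (ε / 2) * tc) := by
    intro ρ hρ htle
    have hρ0 : 0 < ρ := lt_of_lt_of_le hρc_pos hρ.1
    have ha : ρ ^ (γ - 1 - 1) = ρ ^ (γ - 1) / ρ := Real.rpow_sub_one hρ0.ne' (γ - 1)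
    have hident : ρ * D ρ = -((γ + 1) * (tc - t ρ s)) - 2 * (γ - 1) * s * (ρ ^ 2 - ρc ^ 2) := by
      rw [hDdef]
      simp only
      rw [ha, ht, hh, htc_val]
      field_simp
      ring
    have h1 : ε / 2 * tc ≤ tc - t ρ s := by nlinarith
    have h2 : (0:ℝ) ≤ ρ ^ 2 - ρc ^ 2 := by nlinarith [hρ.1]
    rw [hident]
    nlinarith [mul_le_mul_of_nonneg_left h1 hγ1.le,
      mul_nonneg (by positivity : (0:ℝ) ≤ 2 * (γ - 1) * s) h2]
  clear_value D
  constructor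
  · intro ρ hρ htle d hd
    have hρ0 : 0 < ρ := lt_of_lt_of_le hρc_pos hρ.1
    have hdD : d = D ρ := hd.unique (hderiv ρ hρ0)
    have hk := hkey ρ hρ htle
    rw [hdD, le_div_iff₀ (by positivity : (0:ℝ) < 2 * ρ)]
    have e2 : D ρ * (2 * ρ) = 2 * (ρ * D ρ) := by ring
    rw [e2]
    linarith
  · intro τ hτ0 hτle
    have hτlt : τ < tc := lt_of_le_of_lt hτle (by nlinarith)
    have hmem : τ ∈ Ico (0:ℝ) tc := ⟨hτ0, hτlt⟩
    obtain ⟨hρmem, hbr⟩ := hbranch τ hmem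
    have hρ0 : 0 < ϱ τ := hρc_pos.trans hρmem.1
    have hρIcc : ϱ τ ∈ Icc ρc ρm := ⟨hρmem.1.le, hρmem.2⟩
    have htle : t (ϱ τ) s ≤ (1 - ε / 2) * tc := by rw [hbr]; exact hτle
    have hk := hkey (ϱ τ) hρIcc htle
    have hDneg : D (ϱ τ) < 0 := by
      by_contra h'
      push_neg at h'
      nlinarith [mul_nonneg hρ0.le h',
        mul_pos (mul_pos hγ1 (half_pos hε0)) htc_pos]
    have hg0 : 0 < g τ := by rw [hg]; positivity
    have hgτ : (g τ)⁻¹ = ϱ τ := by rw [hg, inv_inv]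
    have hgd := hg' τ hmem
    have hinv : HasDerivWithinAt (fun τ' => (g τ')⁻¹) (-(g' τ) / (g τ) ^ 2) (Ico 0 tc) τ :=
      hgd.inv hg0.ne'
    have hDA : HasDerivAt (fun r => t r s) (D (ϱ τ)) ((g τ)⁻¹) := by
      rw [hgτ]; exact hderiv (ϱ τ) hρ0
    have hcomp : HasDerivWithinAt (fun τ' => t ((g τ')⁻¹) s)
        (D (ϱ τ) * (-(g' τ) / (g τ) ^ 2)) (Ico 0 tc) τ :=
      hDA.comp_hasDerivWithinAt (h₂ := fun r => t r s) τ hinv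
    have hF : HasDerivWithinAt (fun τ' => t ((g τ')⁻¹) s) 1 (Ico 0 tc) τ := by
      apply (hasDerivAt_id τ).hasDerivWithinAt.congr
      · intro y hy
        rw [hg, inv_inv, (hbranch y hy).2]; rfl
      · rw [hg, inv_inv, hbr]; rfl
    have hud : UniqueDiffWithinAt ℝ (Ico (0:ℝ) tc) τ := uniqueDiffOn_Ico 0 tc τ hmem
    have huniq : D (ϱ τ) * (-(g' τ) / (g τ) ^ 2) = 1 := by
      rw [← hcomp.derivWithin hud, hF.derivWithin hud]
    have hE : g' τ * (-(D (ϱ τ))) = (g τ) ^ 2 := by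
      have hg2 : (g τ) ^ 2 ≠ 0 := by positivity
      field_simp at huniq
      linarith [huniq]
    have hgpos : 0 < g' τ := by
      have h2 : 0 < g' τ * (-(D (ϱ τ))) := by rw [hE]; positivity
      rcases mul_pos_iff.mp h2 with ⟨hp, _⟩ | ⟨_, hn⟩
      · exact hp
      · linarith
    refine ⟨hgpos, ?_⟩
    have hρg : ϱ τ * g τ = 1 := by
      rw [hg]; field_simp
    rw [le_div_iff₀ (by positivity : (0:ℝ) < (γ + 1) * ε * tc)]
    have hAle : (γ + 1) * ε * tc ≤ 2 * (ϱ τ) * (-(D (ϱ τ))) := by linarith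
    calc g' τ * ((γ + 1) * ε * tc) ≤ g' τ * (2 * (ϱ τ) * (-(D (ϱ τ)))) :=
          mul_le_mul_of_nonneg_left hAle hgpos.le
      _ = 2 * (ϱ τ) * (g' τ * (-(D (ϱ τ)))) := by ring
      _ = 2 * (ϱ τ) * (g τ) ^ 2 := by rw [hE]
      _ = 2 * (ϱ τ * g τ) * g τ := by ring
      _ = 2 * g τ := by rw [hρg]; ring
end

section
/- Let B : J → (0,∞) be a C¹ function on an open interval J and fix Q ∈ J. For z ∈ J write ϱ(t,z) for the subsonic density branch with Bernoulli value B(z), i.e., the unique element of (ρ_c(B(z)), ρ_m(B(z))] with 2ϱ(t,z)²(B(z) − h(ϱ(t,z))) = t, defined for 0 ≤ t < t_c(B(z)). Define G(t,z) = (1/2)∫₀^t (1/ϱ(s,z)) ds + (1/γ)(ϱ(0,z)^γ − ϱ(0,Q)^γ). Then for every z ∈ J and every t ∈ [0, t_c(B(z))), G is differentiable in z and ∂_z G(t,z) = B′(z)·ϱ(t,z). -/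
open Set Real MeasureTheory Filter Topology

lemma st13_shift {ρ : ℝ} (hρ : 0 < ρ) (c : ℝ) : ρ ^ (c + 1) = ρ ^ c * ρ := by
  rw [Real.rpow_add hρ, Real.rpow_one]

lemma st13_split {γ x : ℝ} (hx : 0 < x) : x ^ 2 * x ^ (γ - 1) = x ^ (γ + 1) := by
  rw [← Real.rpow_natCast x 2, ← Real.rpow_add hx]; norm_num; congr 1; ring

lemma st13_base {γ s ρ : ℝ} (hγ : 1 < γ) (hs : 0 < s)
    (hρ : (2 * (γ - 1) / (γ + 1) * s) ^ (1 / (γ - 1)) < ρ) :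
    0 < ρ ∧ 2 * s < (γ + 1) / (γ - 1) * ρ ^ (γ - 1) := by
  have hc : (0:ℝ) < 2 * (γ - 1) / (γ + 1) * s := by
    have : (0:ℝ) < γ - 1 := by linarith
    have : (0:ℝ) < γ + 1 := by linarith
    positivity
  have hcp : (0:ℝ) < (2 * (γ - 1) / (γ + 1) * s) ^ (1 / (γ - 1)) :=
    Real.rpow_pos_of_pos hc _
  have hρ0 : 0 < ρ := hcp.trans hρ
  refine ⟨hρ0, ?_⟩
  have h1 : ((2 * (γ - 1) / (γ + 1) * s) ^ (1 / (γ - 1))) ^ (γ - 1) < ρ ^ (γ - 1) :=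
    Real.rpow_lt_rpow hcp.le hρ (by linarith)
  rw [← Real.rpow_mul hc.le, one_div, inv_mul_cancel₀ (by linarith : γ - 1 ≠ 0),
    Real.rpow_one] at h1
  have hγ1 : (0:ℝ) < γ - 1 := by linarith
  have hγ2 : (0:ℝ) < γ + 1 := by linarith
  rw [div_mul_eq_mul_div, div_lt_iff₀ hγ2] at h1
  rw [div_mul_eq_mul_div, lt_div_iff₀ hγ1]
  linarith

lemma st13_tau' {γ s ρ τ : ℝ} (hγ : 1 < γ) (h0 : 0 < ρ)
    (h1 : 2 * s < (γ + 1) / (γ - 1) * ρ ^ (γ - 1))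
    (heq : 2 * ρ ^ 2 * (s - ρ ^ (γ - 1) / (γ - 1)) = τ) :
    τ < ρ ^ 2 * ρ ^ (γ - 1) := by
  have hγ1 : (0:ℝ) < γ - 1 := by linarith
  have h3 : 2 * s * (γ - 1) < (γ + 1) * ρ ^ (γ - 1) := by
    rw [div_mul_eq_mul_div, lt_div_iff₀ hγ1] at h1; linarith
  have h2 : (0:ℝ) < ρ ^ 2 := by positivity
  have heq2 : τ * (γ - 1) = 2 * ρ ^ 2 * s * (γ - 1) - 2 * ρ ^ 2 * ρ ^ (γ - 1) := by
    field_simp at heq; linarith [heq]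
  have key : 0 < ρ ^ 2 * ((γ + 1) * ρ ^ (γ - 1) - 2 * s * (γ - 1)) :=
    mul_pos h2 (by linarith)
  nlinarith [key, hγ1]

lemma st13_fderiv {γ x : ℝ} (hγ : 1 < γ) (hx : 0 < x) (s : ℝ) :
    HasStrictDerivAt (fun y : ℝ => 2 * y ^ 2 * (s - y ^ (γ - 1) / (γ - 1)))
      (2 * x * (2 * s - (γ + 1) / (γ - 1) * x ^ (γ - 1))) x := by
  have h1 : HasStrictDerivAt (fun y : ℝ => 2 * y ^ 2) (2 * (2 * x ^ 1)) x :=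
    (hasStrictDerivAt_pow 2 x).const_mul 2
  have h2 : HasStrictDerivAt (fun y : ℝ => s - y ^ (γ - 1) / (γ - 1))
      (-((γ - 1) * x ^ (γ - 1 - 1) / (γ - 1))) x :=
    ((Real.hasStrictDerivAt_rpow_const (p := γ - 1) (Or.inl hx.ne')).div_const (γ - 1)).const_sub s
  have := h1.mul h2
  refine this.congr_deriv ?_
  have hX : x ^ (γ - 1) = x ^ (γ - 1 - 1) * x := by
    rw [← st13_shift hx]; ring_nf
  have hne : γ - 1 ≠ 0 := sub_ne_zero.2 (by linarith)
  field_simp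
  rw [hX]; ring

lemma st13_psideriv {γ x : ℝ} (hγ : 1 < γ) (hx : 0 < x) (τ : ℝ) :
    HasStrictDerivAt (fun y : ℝ => τ / (2 * y ^ 2) + y ^ (γ - 1) / (γ - 1))
      ((x ^ 2 * x ^ (γ - 1) - τ) / x ^ 3) x := by
  have h1 : HasStrictDerivAt (fun y : ℝ => 2 * y ^ 2) (2 * (2 * x ^ 1)) x :=
    (hasStrictDerivAt_pow 2 x).const_mul 2
  have h2 : HasStrictDerivAt (fun y : ℝ => τ / (2 * y ^ 2))
      ((0 * (2 * x ^ 2) - τ * (2 * (2 * x ^ 1))) / (2 * x ^ 2) ^ 2) x :=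
    (hasStrictDerivAt_const x τ).div h1 (by positivity)
  have h3 : HasStrictDerivAt (fun y : ℝ => y ^ (γ - 1) / (γ - 1))
      ((γ - 1) * x ^ (γ - 1 - 1) / (γ - 1)) x :=
    (Real.hasStrictDerivAt_rpow_const (p := γ - 1) (Or.inl hx.ne')).div_const (γ - 1)
  have := h2.add h3
  refine this.congr_deriv ?_
  have hX : x ^ (γ - 1) = x ^ (γ - 1 - 1) * x := by
    rw [← st13_shift hx]; ring_nf
  have hne : γ - 1 ≠ 0 := sub_ne_zero.2 (by linarith)
  field_simp
  rw [hX]; ring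

lemma st13_Phideriv {γ x : ℝ} (hγ : 1 < γ) (hx : 0 < x) (u : ℝ) :
    HasStrictDerivAt (fun y : ℝ => 4 * u * y - 2 * ((γ + 1) / (γ * (γ - 1))) * y ^ γ)
      (2 * (2 * u - (γ + 1) / (γ - 1) * x ^ (γ - 1))) x := by
  have h1 : HasStrictDerivAt (fun y : ℝ => 4 * u * y) (4 * u) x := by
    simpa using (hasStrictDerivAt_id x).const_mul (4 * u)
  have h2 : HasStrictDerivAt (fun y : ℝ => y ^ γ) (γ * x ^ (γ - 1)) x :=
    Real.hasStrictDerivAt_rpow_const (p := γ) (Or.inl hx.ne')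
  have := h1.sub ((h2.const_mul (2 * ((γ + 1) / (γ * (γ - 1))))))
  refine this.congr_deriv ?_
  have hne : γ - 1 ≠ 0 := sub_ne_zero.2 (by linarith)
  have hγ0 : γ ≠ 0 := by positivity
  field_simp
  ring

lemma st13_root_gt {γ τ ρ : ℝ} (hγ : 1 < γ) (hτ : 0 ≤ τ) (h0 : 0 < ρ)
    (ht : τ < ρ ^ 2 * ρ ^ (γ - 1)) : τ ^ (1 / (γ + 1)) < ρ := by
  rw [st13_split h0] at ht
  have h1 : τ ^ (1 / (γ + 1)) < (ρ ^ (γ + 1)) ^ (1 / (γ + 1)) :=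
    Real.rpow_lt_rpow hτ ht (by positivity)
  rwa [← Real.rpow_mul h0.le, mul_one_div, div_self (by positivity : γ + 1 ≠ 0),
    Real.rpow_one] at h1

lemma st13_psiMono {γ τ : ℝ} (hγ : 1 < γ) (hτ : 0 ≤ τ) :
    StrictMonoOn (fun y : ℝ => τ / (2 * y ^ 2) + y ^ (γ - 1) / (γ - 1))
      (Ioi (τ ^ (1 / (γ + 1)))) := by
  have hm : 0 ≤ τ ^ (1 / (γ + 1)) := Real.rpow_nonneg hτ _
  have hpos : ∀ x ∈ Ioi (τ ^ (1 / (γ + 1))), 0 < x := fun x hx => lt_of_le_of_lt hm hx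
  apply strictMonoOn_of_deriv_pos (convex_Ioi _)
  · exact fun x hx => ((st13_psideriv hγ (hpos x hx) τ).hasDerivAt.continuousAt).continuousWithinAt
  · intro x hx
    rw [interior_Ioi] at hx
    have hx0 : 0 < x := hpos x hx
    rw [(st13_psideriv hγ hx0 τ).hasDerivAt.deriv]
    have h1 : τ < x ^ 2 * x ^ (γ - 1) := by
      rw [st13_split hx0]
      calc τ = (τ ^ (1 / (γ + 1))) ^ (γ + 1) := by
            rw [← Real.rpow_mul hτ, one_div,
              inv_mul_cancel₀ (by positivity : γ + 1 ≠ 0), Real.rpow_one]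
        _ < x ^ (γ + 1) := Real.rpow_lt_rpow hm hx (by positivity)
    exact div_pos (by linarith) (by positivity)

lemma st13_fAnti {γ u : ℝ} (hγ : 1 < γ) (hu : 0 < u) :
    StrictAntiOn (fun y : ℝ => 2 * y ^ 2 * (u - y ^ (γ - 1) / (γ - 1)))
      (Ioi ((2 * (γ - 1) / (γ + 1) * u) ^ (1 / (γ - 1)))) := by
  have hc : (0:ℝ) < (2 * (γ - 1) / (γ + 1) * u) ^ (1 / (γ - 1)) := by
    have h1 : (0:ℝ) < γ - 1 := by linarith
    have h2 : (0:ℝ) < γ + 1 := by linarith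
    exact Real.rpow_pos_of_pos (by positivity) _
  apply strictAntiOn_of_deriv_neg (convex_Ioi _)
  · exact fun x hx =>
      ((st13_fderiv hγ (hc.trans hx) u).hasDerivAt.continuousAt).continuousWithinAt
  · intro x hx
    rw [interior_Ioi] at hx
    have hx0 : 0 < x := hc.trans hx
    rw [(st13_fderiv hγ hx0 u).hasDerivAt.deriv]
    obtain ⟨-, h2⟩ := st13_base hγ hu hx
    have : 2 * u - (γ + 1) / (γ - 1) * x ^ (γ - 1) < 0 := by linarith
    nlinarith

lemma st13_psi_val {γ s ρ τ : ℝ} (hγ : 1 < γ) (h0 : 0 < ρ)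
    (heq : 2 * ρ ^ 2 * (s - ρ ^ (γ - 1) / (γ - 1)) = τ) :
    τ / (2 * ρ ^ 2) + ρ ^ (γ - 1) / (γ - 1) = s := by
  have h1 : γ - 1 ≠ 0 := by intro hc; linarith
  have h2 : (2:ℝ) * ρ ^ 2 ≠ 0 := by positivity
  rw [← heq]; field_simp; ring

lemma st13_final_alg {γ Bz Bp p X E : ℝ} (hγ0 : γ ≠ 0) (hγ1 : γ - 1 ≠ 0) (hE : E ≠ 0)
    (hEeq : E = (γ+1)/(γ-1)*X - 2*Bz) :
    Bp * p = 2*Bp*p + 2*Bz*(p/E*Bp) - (γ+1)/(γ*(γ-1)) * ((p/E*Bp)*γ*X) := by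
  have h3 : (γ+1)/(γ*(γ-1)) * γ * X = E + 2*Bz := by
    rw [hEeq]; field_simp; ring
  have h4 : p/E*E = p := div_mul_cancel₀ p hE
  linear_combination (p/E*Bp) * h3 + Bp * h4

lemma st13_loc {F q Bf : ℝ → ℝ} {U t : Set ℝ} {x0 D : ℝ}
    (hF : HasStrictDerivAt F D (q x0)) (hD : D ≠ 0)
    (hU : IsOpen U) (hinj : InjOn F U) (hq0 : q x0 ∈ U)
    (hB : ContinuousWithinAt Bf t x0)
    (hqB : ∀ᶠ w in 𝓝[t] x0, F (q w) = Bf w)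
    (hqU : ∀ᶠ w in 𝓝[t] x0, q w ∈ U)
    (hBx : Bf x0 = F (q x0)) :
    ∃ g : ℝ → ℝ, (∀ᶠ w in 𝓝[t] x0, q w = g (Bf w)) ∧
      HasStrictDerivAt g D⁻¹ (Bf x0) ∧ g (Bf x0) = q x0 ∧ ContinuousAt g (Bf x0) := by
  set F' := hF.hasStrictFDerivAt_equiv hD with hF'def
  set g : ℝ → ℝ := F'.localInverse _ _ _ with hg
  have htend : Tendsto Bf (𝓝[t] x0) (𝓝 (F (q x0))) := hBx ▸ hB
  have hri : ∀ᶠ w in 𝓝[t] x0, F (g (Bf w)) = Bf w := htend.eventually F'.eventually_right_inverse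
  have hgc : ContinuousAt g (F (q x0)) := F'.localInverse_continuousAt
  have hgU : ∀ᶠ w in 𝓝[t] x0, g (Bf w) ∈ U := by
    have : Tendsto (fun w => g (Bf w)) (𝓝[t] x0) (𝓝 (g (F (q x0)))) := (hgc.tendsto.comp htend)
    rw [show g (F (q x0)) = q x0 from F'.localInverse_apply_image] at this
    exact this.eventually (hU.mem_nhds hq0)
  refine ⟨g, ?_, ?_, ?_, ?_⟩
  · filter_upwards [hqB, hqU, hri, hgU] with w h1 h2 h3 h4
    exact hinj h2 h4 (by rw [h1, h3])
  · rw [hBx]; exact hF.to_localInverse hD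
  · rw [hBx]; exact F'.localInverse_apply_image
  · rw [hBx]; exact hgc

/-- for the truncated energy density
`G(t,z) = (1/2)∫₀ᵗ 1/ϱ(s,z) ds + (1/γ)(ϱ(0,z)^γ − ϱ(0,Q)^γ)` built from the subsonic
density branch `ϱ` with Bernoulli function `B`, one has `∂_z G(t,z) = B′(z)·ϱ(t,z)`. -/
theorem stmt_13 (γ : ℝ) (hγ : 1 < γ)
    (h : ℝ → ℝ) (hh : ∀ ρ : ℝ, h ρ = ρ ^ (γ - 1) / (γ - 1))
    (ρc ρm tc : ℝ → ℝ)
    (hρc : ∀ s : ℝ, ρc s = (2 * (γ - 1) / (γ + 1) * s) ^ (1 / (γ - 1)))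
    (hρm : ∀ s : ℝ, ρm s = ((γ - 1) * s) ^ (1 / (γ - 1)))
    (htc : ∀ s : ℝ, tc s = 2 * ρc s ^ 2 * (s - h (ρc s)))
    (a b : ℝ) (B B' : ℝ → ℝ)
    (hBpos : ∀ z ∈ Ioo a b, 0 < B z)
    (hB : ∀ z ∈ Ioo a b, HasDerivAt B (B' z) z)
    (hB'cont : ContinuousOn B' (Ioo a b))
    (Q : ℝ) (hQ : Q ∈ Ioo a b)
    (ϱ : ℝ → ℝ → ℝ)
    (hbranch : ∀ z ∈ Ioo a b, ∀ τ ∈ Ico (0 : ℝ) (tc (B z)),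
      ϱ τ z ∈ Ioc (ρc (B z)) (ρm (B z)) ∧ 2 * (ϱ τ z) ^ 2 * (B z - h (ϱ τ z)) = τ)
    (G : ℝ → ℝ → ℝ)
    (hG : ∀ τ z : ℝ, G τ z = (1 / 2) * (∫ σ in (0 : ℝ)..τ, (ϱ σ z)⁻¹)
        + (1 / γ) * ((ϱ 0 z) ^ γ - (ϱ 0 Q) ^ γ)) :
    ∀ z ∈ Ioo a b, ∀ τ ∈ Ico (0 : ℝ) (tc (B z)),
      HasDerivAt (fun w => G τ w) (B' z * ϱ τ z) z := by
  have hγ1 : (0:ℝ) < γ - 1 := by linarith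
  have hγ0 : (0:ℝ) < γ := by linarith
  -- rewritten branch facts
  have hbr : ∀ w ∈ Ioo a b, ∀ σ ∈ Ico (0 : ℝ) (tc (B w)),
      (2 * (γ - 1) / (γ + 1) * B w) ^ (1 / (γ - 1)) < ϱ σ w ∧
      2 * (ϱ σ w) ^ 2 * (B w - (ϱ σ w) ^ (γ - 1) / (γ - 1)) = σ := by
    intro w hw σ hσ
    obtain ⟨hm, he⟩ := hbranch w hw σ hσ
    constructor
    · have := hm.1; rwa [hρc] at this
    · have := he; rwa [hh] at this
  intro z hz τ hτ
  obtain ⟨hτ0, hτtc⟩ := hτ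
  have hs : 0 < B z := hBpos z hz
  -- Step B : eventual membership
  have hcontB : ContinuousAt B z := (hB z hz).continuousAt
  have htcc : ContinuousAt (fun w => tc (B w)) z := by
    have hformula : ∀ u : ℝ, tc u =
        2 * ((2 * (γ - 1) / (γ + 1) * u) ^ (1 / (γ - 1))) ^ 2 *
          (u - ((2 * (γ - 1) / (γ + 1) * u) ^ (1 / (γ - 1))) ^ (γ - 1) / (γ - 1)) := by
      intro u; rw [htc, hρc, hh]
    have hlin : ContinuousAt (fun u : ℝ => 2 * (γ - 1) / (γ + 1) * u) (B z) := by fun_prop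
    have hcu : ContinuousAt (fun u : ℝ => (2 * (γ - 1) / (γ + 1) * u) ^ (1 / (γ - 1))) (B z) :=
      hlin.rpow_const (Or.inl (by positivity : 2 * (γ - 1) / (γ + 1) * B z ≠ 0))
    have hcu2 : ContinuousAt
        (fun u : ℝ => ((2 * (γ - 1) / (γ + 1) * u) ^ (1 / (γ - 1))) ^ (γ - 1)) (B z) :=
      hcu.rpow_const (Or.inl (ne_of_gt (Real.rpow_pos_of_pos (by positivity) _)))
    have : ContinuousAt (fun u : ℝ =>
        2 * ((2 * (γ - 1) / (γ + 1) * u) ^ (1 / (γ - 1))) ^ 2 *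
          (u - ((2 * (γ - 1) / (γ + 1) * u) ^ (1 / (γ - 1))) ^ (γ - 1) / (γ - 1))) (B z) :=
      ((hcu.pow 2).const_mul 2).mul (continuousAt_id.sub (hcu2.div_const _))
    have := this.comp hcontB
    simpa only [Function.comp_def, ← hformula] using this
  have hev : ∀ᶠ w in 𝓝 z, w ∈ Ioo a b ∧ τ < tc (B w) := by
    filter_upwards [isOpen_Ioo.mem_nhds hz, htcc.eventually (eventually_gt_nhds hτtc)]
      with w h1 h2
    exact ⟨h1, h2⟩
  -- Step A : explicit formula for G τ w
  have hGid : ∀ w ∈ Ioo a b, τ < tc (B w) →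
      G τ w = 2 * B w * ϱ τ w - (γ + 1) / (γ * (γ - 1)) * (ϱ τ w) ^ γ
        - 1 / γ * (ϱ 0 Q) ^ γ := by
    intro w hw hlt
    have hu : 0 < B w := hBpos w hw
    set u := B w with hudef
    have hmem : ∀ σ ∈ Icc (0:ℝ) τ, σ ∈ Ico (0:ℝ) (tc u) :=
      fun σ hσ => ⟨hσ.1, lt_of_le_of_lt hσ.2 hlt⟩
    have hpos : ∀ σ ∈ Icc (0:ℝ) τ, 0 < ϱ σ w := by
      intro σ hσ
      exact (st13_base hγ hu (hbr w hw σ (hmem σ hσ)).1).1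
    -- local inverse machinery for the σ-direction
    have hfd : ∀ σ ∈ Icc (0:ℝ) τ,
        HasStrictDerivAt (fun y : ℝ => 2 * y ^ 2 * (u - y ^ (γ - 1) / (γ - 1)))
          (2 * ϱ σ w * (2 * u - (γ + 1) / (γ - 1) * (ϱ σ w) ^ (γ - 1))) (ϱ σ w) :=
      fun σ hσ => st13_fderiv hγ (hpos σ hσ) u
    have hfneg : ∀ σ ∈ Icc (0:ℝ) τ,
        2 * ϱ σ w * (2 * u - (γ + 1) / (γ - 1) * (ϱ σ w) ^ (γ - 1)) < 0 := by
      intro σ hσ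
      obtain ⟨h0, h1⟩ := st13_base hγ hu (hbr w hw σ (hmem σ hσ)).1
      nlinarith
    have hloc : ∀ σ0 ∈ Icc (0:ℝ) τ, ∃ g : ℝ → ℝ,
        (∀ᶠ x in 𝓝[Icc (0:ℝ) τ] σ0, ϱ x w = g x) ∧
        HasStrictDerivAt g
          (2 * ϱ σ0 w * (2 * u - (γ + 1) / (γ - 1) * (ϱ σ0 w) ^ (γ - 1)))⁻¹ σ0 ∧
        g σ0 = ϱ σ0 w ∧ ContinuousAt g σ0 := by
      intro σ0 hσ0
      obtain ⟨g, h1, h2, h3, h4⟩ := st13_loc (q := fun x => ϱ x w) (Bf := id)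
        (t := Icc (0:ℝ) τ) (U := Ioi ((2 * (γ - 1) / (γ + 1) * u) ^ (1 / (γ - 1))))
        (hfd σ0 hσ0) (ne_of_lt (hfneg σ0 hσ0)) isOpen_Ioi
        (st13_fAnti hγ hu).injOn (hbr w hw σ0 (hmem σ0 hσ0)).1
        continuousWithinAt_id
        (by filter_upwards [self_mem_nhdsWithin] with σ hσ
            exact (hbr w hw σ (hmem σ hσ)).2)
        (by filter_upwards [self_mem_nhdsWithin] with σ hσ
            exact (hbr w hw σ (hmem σ hσ)).1)
        ((hbr w hw σ0 (hmem σ0 hσ0)).2).symm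
      exact ⟨g, by simpa using h1, h2, h3, h4⟩
    have contϱ : ContinuousOn (fun σ => ϱ σ w) (Icc (0:ℝ) τ) := by
      intro σ0 hσ0
      obtain ⟨g, h1, h2, h3, h4⟩ := hloc σ0 hσ0
      exact (h4.continuousWithinAt).congr_of_eventuallyEq h1 h3.symm
    have derivϱ : ∀ σ0 ∈ Ioo (0:ℝ) τ, HasDerivAt (fun σ => ϱ σ w)
        (2 * ϱ σ0 w * (2 * u - (γ + 1) / (γ - 1) * (ϱ σ0 w) ^ (γ - 1)))⁻¹ σ0 := by
      intro σ0 hσ0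
      obtain ⟨g, h1, h2, h3, h4⟩ := hloc σ0 (Ioo_subset_Icc_self hσ0)
      have hIcc : Icc (0:ℝ) τ ∈ 𝓝 σ0 := Icc_mem_nhds hσ0.1 hσ0.2
      have h1' : ∀ᶠ x in 𝓝 σ0, ϱ x w = g x := by
        rw [← nhdsWithin_eq_nhds.2 hIcc]; exact h1
      exact h2.hasDerivAt.congr_of_eventuallyEq h1'
    -- FTC for Ψ = Φ ∘ ϱ
    set Φ : ℝ → ℝ := fun y => 4 * u * y - 2 * ((γ + 1) / (γ * (γ - 1))) * y ^ γ with hΦdef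
    have contΨ : ContinuousOn (fun σ => Φ (ϱ σ w)) (Icc (0:ℝ) τ) := by
      intro σ0 hσ0
      exact ContinuousAt.comp_continuousWithinAt (g := Φ) (f := fun σ => ϱ σ w)
        ((st13_Phideriv hγ (hpos σ0 hσ0) u).hasDerivAt.continuousAt) (contϱ σ0 hσ0)
    have derivΨ : ∀ σ0 ∈ Ioo (0:ℝ) τ,
        HasDerivAt (fun σ => Φ (ϱ σ w)) ((ϱ σ0 w)⁻¹) σ0 := by
      intro σ0 hσ0
      have hc := ((st13_Phideriv hγ (hpos σ0 (Ioo_subset_Icc_self hσ0))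
        u).hasDerivAt).comp σ0 (derivϱ σ0 hσ0)
      refine hc.congr_deriv ?_
      have h0 : ϱ σ0 w ≠ 0 := (hpos σ0 (Ioo_subset_Icc_self hσ0)).ne'
      have hne := ne_of_lt (hfneg σ0 (Ioo_subset_Icc_self hσ0))
      have hne2 : 2 * u - (γ + 1) / (γ - 1) * (ϱ σ0 w) ^ (γ - 1) ≠ 0 := by
        intro hzero
        apply hne; rw [hzero]; ring
      have hne3 : 2 * u * (γ - 1) - (γ + 1) * (ϱ σ0 w) ^ (γ - 1) ≠ 0 := by
        intro hc; apply hne2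
        field_simp
        linarith
      field_simp
    have hint : IntervalIntegrable (fun σ => (ϱ σ w)⁻¹) volume 0 τ := by
      apply ContinuousOn.intervalIntegrable
      rw [uIcc_of_le hτ0]
      exact contϱ.inv₀ (fun σ hσ => (hpos σ hσ).ne')
    have hFTC : ∫ σ in (0:ℝ)..τ, (ϱ σ w)⁻¹ = Φ (ϱ τ w) - Φ (ϱ 0 w) :=
      intervalIntegral.integral_eq_sub_of_hasDeriv_right_of_le hτ0 contΨ
        (fun x hx => (derivΨ x hx).hasDerivWithinAt) hint
    -- the value at σ = 0
    have h0mem : (0:ℝ) ∈ Ico (0:ℝ) (tc u) := ⟨le_refl _, lt_of_le_of_lt hτ0 hlt⟩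
    have hp00 : 0 < ϱ 0 w := hpos 0 ⟨le_refl _, hτ0⟩
    have hX0 : (ϱ 0 w) ^ (γ - 1) = (γ - 1) * u := by
      have he := (hbr w hw 0 h0mem).2
      have h2 : (2 : ℝ) * (ϱ 0 w) ^ 2 ≠ 0 := by positivity
      have := mul_eq_zero.1 he
      rcases this with h' | h'
      · exact absurd h' h2
      · have : u = (ϱ 0 w) ^ (γ - 1) / (γ - 1) := by linarith
        rw [this]; field_simp
    have hrg : (ϱ 0 w) ^ γ = (ϱ 0 w) ^ (γ - 1) * ϱ 0 w := by
      have := st13_shift hp00 (γ - 1)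
      rw [show γ - 1 + 1 = γ by ring] at this
      exact this
    rw [hG, hFTC]
    simp only [hΦdef]
    rw [hrg, hX0]
    field_simp [hγ0.ne', hγ1.ne']
    ring
  -- Step C : derivative of w ↦ ϱ τ w at z
  have hτIco : τ ∈ Ico (0:ℝ) (tc (B z)) := ⟨hτ0, hτtc⟩
  obtain ⟨hρcz, heqz⟩ := hbr z hz τ hτIco
  obtain ⟨hp0, hkey⟩ := st13_base hγ hs hρcz
  have hptau : τ < (ϱ τ z) ^ 2 * (ϱ τ z) ^ (γ - 1) := st13_tau' hγ hp0 hkey heqz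
  set p := ϱ τ z with hpdef
  set D : ℝ := (p ^ 2 * p ^ (γ - 1) - τ) / p ^ 3 with hDdef
  have hDpos : 0 < D := div_pos (by linarith) (by positivity)
  have hψz : τ / (2 * p ^ 2) + p ^ (γ - 1) / (γ - 1) = B z :=
    st13_psi_val hγ hp0 heqz
  obtain ⟨g, hgev, hgd, hgx, hgc⟩ := st13_loc (F := fun y : ℝ =>
      τ / (2 * y ^ 2) + y ^ (γ - 1) / (γ - 1)) (q := fun w => ϱ τ w) (Bf := B)
    (t := univ) (U := Ioi (τ ^ (1 / (γ + 1)))) (x0 := z)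
    (st13_psideriv hγ hp0 τ) hDpos.ne' isOpen_Ioi
    (st13_psiMono hγ hτ0).injOn (st13_root_gt hγ hτ0 hp0 hptau)
    hcontB.continuousWithinAt
    (by rw [nhdsWithin_univ]
        filter_upwards [hev] with w hw
        obtain ⟨hw1, hw2⟩ := hw
        obtain ⟨h1, h2⟩ := hbr w hw1 τ ⟨hτ0, hw2⟩
        have hpw : 0 < ϱ τ w := (st13_base hγ (hBpos w hw1) h1).1
        exact st13_psi_val hγ hpw h2)
    (by rw [nhdsWithin_univ]
        filter_upwards [hev] with w hw
        obtain ⟨hw1, hw2⟩ := hw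
        obtain ⟨h1, h2⟩ := hbr w hw1 τ ⟨hτ0, hw2⟩
        obtain ⟨hpw, hkw⟩ := st13_base hγ (hBpos w hw1) h1
        exact st13_root_gt hγ hτ0 hpw (st13_tau' hγ hpw hkw h2))
    hψz.symm
  rw [nhdsWithin_univ] at hgev
  have hDz : HasDerivAt (fun w => ϱ τ w) (D⁻¹ * B' z) z := by
    have hcomp : HasDerivAt (fun w => g (B w)) (D⁻¹ * B' z) z :=
      (hgd.hasDerivAt).comp z (hB z hz)
    exact hcomp.congr_of_eventuallyEq hgev
  -- Step D : assemble
  have hfinal : HasDerivAt (fun w => 2 * B w * ϱ τ w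
      - (γ + 1) / (γ * (γ - 1)) * (ϱ τ w) ^ γ - 1 / γ * (ϱ 0 Q) ^ γ)
      (B' z * p) z := by
    have hd1 : HasDerivAt (fun w => 2 * B w * ϱ τ w)
        (2 * B' z * p + 2 * B z * (D⁻¹ * B' z)) z := by
      exact ((hB z hz).const_mul 2).mul hDz
    have hd2 : HasDerivAt (fun w => (ϱ τ w) ^ γ)
        ((D⁻¹ * B' z) * γ * p ^ (γ - 1)) z := hDz.rpow_const (Or.inl hp0.ne')
    have := (hd1.sub (hd2.const_mul ((γ + 1) / (γ * (γ - 1))))).sub_const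
      (1 / γ * (ϱ 0 Q) ^ γ)
    refine this.congr_deriv ?_
    -- algebra : 2B'p + 2s D⁻¹B' − c₁γX D⁻¹B' = B'p
    have hτval : τ = 2 * p ^ 2 * (B z - p ^ (γ - 1) / (γ - 1)) := heqz.symm
    have hKexpr : p ^ 2 * p ^ (γ - 1) - τ
        = p ^ 2 * ((γ + 1) / (γ - 1) * p ^ (γ - 1) - 2 * B z) := by
      rw [hτval]; field_simp; ring
    have hKne : (γ + 1) / (γ - 1) * p ^ (γ - 1) - 2 * B z ≠ 0 := by
      intro hc; linarith [hkey]
    have hDval : D = ((γ + 1) / (γ - 1) * p ^ (γ - 1) - 2 * B z) / p := by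
      rw [hDdef, hKexpr]
      rw [show (p:ℝ) ^ 3 = p ^ 2 * p by ring]
      rw [mul_div_mul_left _ _ (by positivity : (p:ℝ) ^ 2 ≠ 0)]
    have hDinv : D⁻¹ = p / ((γ + 1) / (γ - 1) * p ^ (γ - 1) - 2 * B z) := by
      rw [hDval, inv_div]
    rw [hDinv]
    exact (st13_final_alg hγ0.ne' hγ1.ne' hKne rfl).symm
  exact hfinal.congr_of_eventuallyEq
    (by filter_upwards [hev] with w hw; exact hGid w hw.1 hw.2)
end

section
/- Let B : J → (0,∞) be twice differentiable on an open interval J with B′ ≥ 0 and B″ ≥ 0, fix Q ∈ J, and let ϱ(t,z) denote the subsonic density branch with Bernoulli value B(z). Define G(t,z) = (1/2)∫₀^t (1/ϱ(s,z)) ds + (1/γ)(ϱ(0,z)^γ − ϱ(0,Q)^γ). Then for all z ∈ J and 0 ≤ t < t_c(B(z)), the second derivative in z satisfies ∂_{zz} G(t,z) = B″(z)·ϱ(t,z) − 2(B′(z))²·ϱ(t,z)²·∂_t ϱ(t,z), and hence ∂_{zz} G(t,z) ≥ 0 (since ∂_t ϱ(t,z) < 0 on the subsonic branch). -/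
open Set Real MeasureTheory

open Topology Filter


lemma stmt15_pos {γ s : ℝ} (hγ : 1 < γ) (hs : 0 < s) :
    (0:ℝ) < 2*(γ-1)/(γ+1)*s := by
  have h1 : (0:ℝ) < γ - 1 := by linarith
  have h2 : (0:ℝ) < γ + 1 := by linarith
  positivity

lemma stmt15_facts {γ s σ ρ : ℝ} (hγ : 1 < γ) (hs : 0 < s) (hσ : 0 ≤ σ)
    (hρgt : (2*(γ-1)/(γ+1)*s) ^ (1/(γ-1)) < ρ)
    (heq : 2 * ρ^2 * (s - ρ^(γ-1)/(γ-1)) = σ) :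
    0 < ρ ∧ σ < ρ^(γ-1) * ρ^2 := by
  have h1 : (0:ℝ) < γ - 1 := by linarith
  have hc : (0:ℝ) < 2*(γ-1)/(γ+1)*s := stmt15_pos hγ hs
  have hρ0 : 0 < ρ := lt_trans (Real.rpow_pos_of_pos hc _) hρgt
  have hkey : 2*(γ-1)/(γ+1)*s < ρ^(γ-1) := by
    have h2 := Real.rpow_lt_rpow (le_of_lt (Real.rpow_pos_of_pos hc _)) hρgt h1
    rwa [← Real.rpow_mul hc.le, one_div, inv_mul_cancel₀ (ne_of_gt h1), Real.rpow_one] at h2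
  refine ⟨hρ0, ?_⟩
  have hρ2 : (0:ℝ) < ρ^2 := by positivity
  have hγ1 : (0:ℝ) < γ + 1 := by linarith
  set u := ρ^(γ-1) with hu
  have hkey2 : 2*(γ-1)*s < u*(γ+1) := by
    rw [div_mul_eq_mul_div, div_lt_iff₀ hγ1] at hkey; linarith
  have heq2 : 2*ρ^2*s*(γ-1) - 2*ρ^2*u = σ*(γ-1) := by
    field_simp at heq; nlinarith [heq]
  nlinarith [mul_lt_mul_of_pos_left hkey2 hρ2]

lemma stmt15_rpow {γ ρ : ℝ} (hρ : 0 < ρ) :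
    ρ ^ (γ+1) = ρ^(γ-1) * ρ^2 ∧ ρ^γ = ρ^(γ-1)*ρ ∧ ρ^(γ-1-1) = ρ^(γ-1)/ρ := by
  refine ⟨?_, ?_, ?_⟩
  · rw [show γ+1 = (γ-1)+2 by ring, Real.rpow_add hρ,
      show (2:ℝ) = ((2:ℕ):ℝ) by norm_num, Real.rpow_natCast]
  · rw [show γ = (γ-1)+1 by ring, Real.rpow_add hρ, Real.rpow_one]; ring_nf
  · rw [Real.rpow_sub hρ, Real.rpow_one]

lemma stmt15_hasDerivAt_psi {γ s σ ρ : ℝ} (hγ : 1 < γ) (hρ : 0 < ρ)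
    (heq : 2 * ρ^2 * (s - ρ^(γ-1)/(γ-1)) = σ) :
    HasDerivAt (fun x : ℝ => 2 * x^2 * (s - x^(γ-1)/(γ-1)))
      ((2*σ - 2*(ρ^(γ-1)*ρ^2))/ρ) ρ := by
  have h1 : (0:ℝ) < γ-1 := by linarith
  have hne : ρ ≠ 0 := ne_of_gt hρ
  have hD := ((hasDerivAt_pow 2 ρ).const_mul (2:ℝ)).mul
    ((hasDerivAt_const ρ s).sub ((Real.hasDerivAt_rpow_const (p := γ-1) (Or.inl hne)).div_const (γ-1)))
  refine hD.congr_deriv ?_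
  symm
  have heq' : 2*ρ^2*(s*(γ-1) - ρ^(γ-1)) = σ*(γ-1) := by field_simp at heq; nlinarith [heq]
  rw [(stmt15_rpow hρ).2.2]
  simp only [Pi.sub_apply]
  field_simp
  linear_combination (-1) * heq'

lemma stmt15_rpow_neg_two {x : ℝ} (hx : 0 < x) : x ^ (-2:ℝ) = (x^2)⁻¹ := by
  rw [show (-2:ℝ) = -((2:ℕ):ℝ) by norm_num, Real.rpow_neg hx.le, Real.rpow_natCast]

lemma stmt15_mem_I {γ σ x : ℝ} (hγ : 1 < γ) (hσ : 0 ≤ σ) (hx : σ ^ (1/(γ+1)) < x) :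
    0 < x ∧ σ < x^(γ-1) * x^2 := by
  have hp : (0:ℝ) < γ + 1 := by linarith
  have ht0 : 0 ≤ σ ^ (1/(γ+1)) := Real.rpow_nonneg hσ _
  have hx0 : 0 < x := lt_of_le_of_lt ht0 hx
  refine ⟨hx0, ?_⟩
  have h2 := Real.rpow_lt_rpow ht0 hx hp
  rw [← Real.rpow_mul hσ, one_div, inv_mul_cancel₀ (ne_of_gt hp), Real.rpow_one,
    (stmt15_rpow hx0).1] at h2
  exact h2

lemma stmt15_into_I {γ σ x : ℝ} (hγ : 1 < γ) (hσ : 0 ≤ σ) (hx0 : 0 < x)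
    (h : σ < x^(γ-1) * x^2) : σ ^ (1/(γ+1)) < x := by
  have hp : (0:ℝ) < γ + 1 := by linarith
  have h2 := Real.rpow_lt_rpow hσ (by rwa [← (stmt15_rpow hx0).1] at h) (by positivity : (0:ℝ) < 1/(γ+1))
  rwa [← Real.rpow_mul hx0.le, mul_one_div, div_self (ne_of_gt hp), Real.rpow_one] at h2

lemma stmt15_hasStrictDerivAt_S {γ σ : ℝ} (hγ : 1 < γ) {x : ℝ} (hx : 0 < x) :
    HasStrictDerivAt (fun ρ : ℝ => ρ^(γ-1)/(γ-1) + σ/2 * ρ^(-2:ℝ))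
      ((x^(γ-1)*x^2 - σ)/x^3) x := by
  have hne : x ≠ 0 := ne_of_gt hx
  have h1 : (0:ℝ) < γ - 1 := by linarith
  have hA := (Real.hasStrictDerivAt_rpow_const (p := γ-1) (Or.inl hne)).div_const (γ-1)
  have hB := (Real.hasStrictDerivAt_rpow_const (p := (-2:ℝ)) (Or.inl hne)).const_mul (σ/2)
  refine (hA.add hB).congr_deriv ?_
  symm
  rw [(stmt15_rpow hx).2.2, show (-2-1:ℝ) = -((3:ℕ):ℝ) by norm_num, Real.rpow_neg hx.le,
    Real.rpow_natCast]
  field_simp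
  ring

lemma stmt15_S_mono {γ σ : ℝ} (hγ : 1 < γ) (hσ : 0 ≤ σ) :
    StrictMonoOn (fun ρ : ℝ => ρ^(γ-1)/(γ-1) + σ/2 * ρ^(-2:ℝ)) (Ioi (σ ^ (1/(γ+1)))) := by
  apply strictMonoOn_of_hasDerivWithinAt_pos (convex_Ioi _)
    (f' := fun x => (x^(γ-1)*x^2 - σ)/x^3)
  · intro x hx
    exact ((stmt15_hasStrictDerivAt_S (σ := σ) hγ (stmt15_mem_I hγ hσ hx).1).hasDerivAt).continuousAt.continuousWithinAt
  · intro x hx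
    rw [interior_Ioi] at hx
    exact ((stmt15_hasStrictDerivAt_S hγ (stmt15_mem_I hγ hσ hx).1).hasDerivAt).hasDerivWithinAt
  · intro x hx
    rw [interior_Ioi] at hx
    obtain ⟨hx0, hlt⟩ := stmt15_mem_I hγ hσ hx
    have : (0:ℝ) < x^3 := by positivity
    exact div_pos (by linarith) this

lemma stmt15_hasDerivAt_rho {γ : ℝ} (hγ : 1 < γ)
    (B B' : ℝ → ℝ) (ϱ : ℝ → ℝ → ℝ) (σ : ℝ) (hσ : 0 ≤ σ) (z' : ℝ)
    (hBz : HasDerivAt B (B' z') z')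
    (hev : ∀ᶠ w in 𝓝 z',
      0 < ϱ σ w ∧ σ < (ϱ σ w)^(γ-1)*(ϱ σ w)^2 ∧
        2*(ϱ σ w)^2*(B w - (ϱ σ w)^(γ-1)/(γ-1)) = σ) :
    HasDerivAt (fun w => ϱ σ w)
      ((((ϱ σ z')^(γ-1)*(ϱ σ z')^2 - σ)/(ϱ σ z')^3)⁻¹ * B' z') z' := by
  have h1 : (0:ℝ) < γ - 1 := by linarith
  have hγne : γ - 1 ≠ 0 := ne_of_gt h1
  obtain ⟨hρ0, hlt0, heq0⟩ := hev.self_of_nhds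
  set ρ₀ := ϱ σ z' with hρ₀def
  set S : ℝ → ℝ := fun ρ => ρ^(γ-1)/(γ-1) + σ/2 * ρ^(-2:ℝ) with hSdef
  set Sd : ℝ := (ρ₀^(γ-1)*ρ₀^2 - σ)/ρ₀^3 with hSddef
  have hSB : ∀ w, 0 < ϱ σ w → 2*(ϱ σ w)^2*(B w - (ϱ σ w)^(γ-1)/(γ-1)) = σ →
      S (ϱ σ w) = B w := by
    intro w hw hweq
    have hw2 : (ϱ σ w)^2 ≠ 0 := by positivity
    have hBweq : B w = (ϱ σ w)^(γ-1)/(γ-1) + σ/(2*(ϱ σ w)^2) := by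
      field_simp at hweq ⊢
      linarith
    rw [hSdef]
    simp only
    rw [stmt15_rpow_neg_two hw, hBweq]
    ring
  have hmono := stmt15_S_mono (σ := σ) hγ hσ
  have hS : HasStrictDerivAt S Sd ρ₀ := stmt15_hasStrictDerivAt_S hγ hρ0
  have hSdpos : 0 < Sd := div_pos (by linarith) (by positivity)
  have hne : Sd ≠ 0 := ne_of_gt hSdpos
  have hρI : σ ^ (1/(γ+1)) < ρ₀ := stmt15_into_I hγ hσ hρ0 hlt0
  have hSz : S ρ₀ = B z' := hSB z' hρ0 heq0
  -- continuity of w ↦ ϱ σ w at z'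
  have htend : Filter.Tendsto (fun w => ϱ σ w) (𝓝 z') (𝓝 ρ₀) := by
    rw [Metric.tendsto_nhds]
    intro ε hε
    set t0 := σ ^ (1/(γ+1)) with ht0def
    set ε' := min ε ((ρ₀ - t0)/2) with hε'def
    have hε'pos : 0 < ε' := lt_min hε (by linarith)
    have hε'le : ε' ≤ ε := min_le_left _ _
    have hε'le2 : ε' ≤ (ρ₀ - t0)/2 := min_le_right _ _
    have hloI : t0 < ρ₀ - ε' := by linarith
    have hhiI : t0 < ρ₀ + ε' := by linarith
    have hlo : S (ρ₀ - ε') < B z' := by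
      rw [← hSz]; exact hmono (mem_Ioi.2 hloI) (mem_Ioi.2 hρI) (by linarith)
    have hhi : B z' < S (ρ₀ + ε') := by
      rw [← hSz]; exact hmono (mem_Ioi.2 hρI) (mem_Ioi.2 hhiI) (by linarith)
    filter_upwards [hev, hBz.continuousAt (Ioo_mem_nhds hlo hhi)] with w hw hBw
    obtain ⟨hρw, hltw, heqw⟩ := hw
    have hwI : t0 < ϱ σ w := stmt15_into_I hγ hσ hρw hltw
    have hSw : S (ϱ σ w) = B w := hSB w hρw heqw
    have hBw' : B w ∈ Ioo (S (ρ₀ - ε')) (S (ρ₀ + ε')) := hBw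
    have hl : ρ₀ - ε' < ϱ σ w := by
      have h2 := hBw'.1; rw [← hSw] at h2
      exact (hmono.lt_iff_lt (mem_Ioi.2 hloI) (mem_Ioi.2 hwI)).1 h2
    have hr : ϱ σ w < ρ₀ + ε' := by
      have h2 := hBw'.2; rw [← hSw] at h2
      exact (hmono.lt_iff_lt (mem_Ioi.2 hwI) (mem_Ioi.2 hhiI)).1 h2
    rw [Real.dist_eq, abs_lt]
    constructor <;> linarith
  -- local inverse
  have hleft := (hS.hasStrictFDerivAt_equiv hne).eventually_left_inverse
  set R := hS.localInverse S Sd ρ₀ hne with hRdef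
  have hRd : HasStrictDerivAt R Sd⁻¹ (S ρ₀) := hS.to_localInverse hne
  have heqev : (fun w => ϱ σ w) =ᶠ[𝓝 z'] (fun w => R (B w)) := by
    filter_upwards [htend.eventually hleft, hev] with w h2 hw
    obtain ⟨hρw, hltw, heqw⟩ := hw
    rw [← hSB w hρw heqw]
    exact h2.symm
  have hcomp : HasDerivAt (fun w => R (B w)) (Sd⁻¹ * B' z') z' := by
    have h3 := hRd.hasDerivAt
    rw [hSz] at h3
    exact h3.comp z' hBz
  exact hcomp.congr_of_eventuallyEq heqev

lemma stmt15_td {γ : ℝ} (hγ : 1 < γ) {s T σ : ℝ} {r rt : ℝ → ℝ}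
    (hσ : σ ∈ Ico (0:ℝ) T)
    (hr : HasDerivWithinAt r (rt σ) (Ico 0 T) σ)
    (heq : ∀ t ∈ Ico (0:ℝ) T, 2*(r t)^2*(s - (r t)^(γ-1)/(γ-1)) = t)
    (hρ : 0 < r σ) :
    ((2*σ - 2*((r σ)^(γ-1)*(r σ)^2))/(r σ)) * rt σ = 1 := by
  have hψ := stmt15_hasDerivAt_psi (s := s) hγ hρ (heq σ hσ)
  have hcomp := HasDerivAt.comp_hasDerivWithinAt σ hψ hr
  have hid : HasDerivWithinAt (fun t : ℝ => t) 1 (Ico (0:ℝ) T) σ := hasDerivWithinAt_id σ _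
  have hc2 : HasDerivWithinAt (fun t : ℝ => t)
      (((2*σ - 2*((r σ)^(γ-1)*(r σ)^2))/(r σ)) * rt σ) (Ico 0 T) σ := by
    apply hcomp.congr
    · intro t ht; exact (heq t ht).symm
    · exact (heq σ hσ).symm
  have hu : UniqueDiffWithinAt ℝ (Ico (0:ℝ) T) σ := uniqueDiffOn_Ico 0 T σ hσ
  rw [← hc2.derivWithin hu, hid.derivWithin hu]

lemma stmt15_ftc {γ : ℝ} (hγ : 1 < γ) {s T τ : ℝ} {r rt : ℝ → ℝ}
    (hτ : τ ∈ Ico (0:ℝ) T)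
    (hr : ∀ t ∈ Ico (0:ℝ) T, HasDerivWithinAt r (rt t) (Ico 0 T) t)
    (heq : ∀ t ∈ Ico (0:ℝ) T, 2*(r t)^2*(s - (r t)^(γ-1)/(γ-1)) = t)
    (hpos : ∀ t ∈ Ico (0:ℝ) T, 0 < r t)
    (hlt : ∀ t ∈ Ico (0:ℝ) T, t < (r t)^(γ-1)*(r t)^2) :
    ∫ t in (0:ℝ)..τ, (r t)⁻¹
      = (4*s*(r τ) - 2*(γ+1)/((γ-1)*γ)*(r τ)^γ)
        - (4*s*(r 0) - 2*(γ+1)/((γ-1)*γ)*(r 0)^γ) := by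
  have h1 : (0:ℝ) < γ - 1 := by linarith
  have hγ0 : (0:ℝ) < γ := by linarith
  have hγne : γ - 1 ≠ 0 := ne_of_gt h1
  have hsub : Icc (0:ℝ) τ ⊆ Ico (0:ℝ) T := fun t ht =>
    ⟨ht.1, lt_of_le_of_lt ht.2 hτ.2⟩
  have hcr : ContinuousOn r (Icc (0:ℝ) τ) := fun t ht =>
    ((hr t (hsub ht)).continuousWithinAt).mono hsub
  have hF : ContinuousOn (fun t => 4*s*(r t) - 2*(γ+1)/((γ-1)*γ)*(r t)^γ) (Icc (0:ℝ) τ) := by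
    apply ContinuousOn.sub
    · exact continuousOn_const.mul hcr
    · exact continuousOn_const.mul (hcr.rpow_const (fun t ht => Or.inr hγ0.le))
  have hderiv : ∀ t ∈ Ioo (0:ℝ) τ,
      HasDerivWithinAt (fun t => 4*s*(r t) - 2*(γ+1)/((γ-1)*γ)*(r t)^γ) ((r t)⁻¹) (Ioi t) t := by
    intro t ht
    have htm : t ∈ Ico (0:ℝ) T := ⟨ht.1.le, lt_trans ht.2 hτ.2⟩
    have hρ := hpos t htm
    have hρne : r t ≠ 0 := ne_of_gt hρ
    have hrt : HasDerivWithinAt r (rt t) (Ioi t) t :=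
      (hr t htm).mono_of_mem_nhdsWithin (mem_nhdsWithin_of_mem_nhds (Ico_mem_nhds ht.1 (lt_trans ht.2 hτ.2)))
    have hg1 : HasDerivAt (fun ρ : ℝ => 4*s*ρ) (4*s) (r t) := by
      simpa using (hasDerivAt_id (r t)).const_mul (4*s)
    have hg2 := (Real.hasDerivAt_rpow_const (x := r t) (p := γ) (Or.inl hρne)).const_mul
      (2*(γ+1)/((γ-1)*γ))
    have hg := hg1.sub hg2
    have hcomp := HasDerivAt.comp_hasDerivWithinAt t hg hrt
    refine hcomp.congr_deriv ?_
    symm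
    -- (r t)⁻¹ = (4 s - c2 * (γ * r t ^ (γ-1))) * rt t
    have td := stmt15_td hγ htm (hr t htm) heq hρ
    have hlt' := hlt t htm
    have hne2 : 2*t - 2*((r t)^(γ-1)*(r t)^2) ≠ 0 := by nlinarith
    have hrteq : rt t = (r t)/(2*t - 2*((r t)^(γ-1)*(r t)^2)) := by
      rw [eq_div_iff hne2]
      field_simp at td
      linarith
    have hseq : s*((γ-1)*(2*(r t)^2)) = (r t)^(γ-1)*(2*(r t)^2) + t*(γ-1) := by
      have h2 := heq t htm
      field_simp at h2
      linarith
    have key : 4*s - 2*(γ+1)/((γ-1)*γ)*(γ*(r t)^(γ-1))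
        = (2*t - 2*((r t)^(γ-1)*(r t)^2))/(r t)^2 := by
      rw [eq_div_iff (by positivity : ((r t):ℝ)^2 ≠ 0)]
      field_simp
      linear_combination 2*hseq
    have hne2' : (r t)^(γ-1)*(r t)^2 - t ≠ 0 := (sub_pos.2 hlt').ne'
    rw [key, hrteq, show 2*t - 2*((r t)^(γ-1)*(r t)^2) = -2*((r t)^(γ-1)*(r t)^2 - t) by ring]
    rw [div_mul_div_comm, eq_div_iff (mul_ne_zero (pow_ne_zero 2 hρne) (mul_ne_zero (by norm_num) hne2'))]
    linear_combination (-2*((r t)^(γ-1)*(r t)^2 - t) * r t) * (inv_mul_cancel₀ hρne)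
  have hint : IntervalIntegrable (fun t => (r t)⁻¹) volume 0 τ := by
    apply ContinuousOn.intervalIntegrable
    rw [uIcc_of_le hτ.1]
    exact hcr.inv₀ (fun t ht => ne_of_gt (hpos t (hsub ht)))
  have := intervalIntegral.integral_eq_sub_of_hasDeriv_right_of_le hτ.1 hF hderiv hint
  rw [this]


set_option maxHeartbeats 2000000 in
/-- convexity in `z` of the energy density
`G(t,z) = (1/2)∫₀ᵗ 1/ϱ(s,z) ds + (1/γ)(ϱ(0,z)^γ − ϱ(0,Q)^γ)`: if `B′ ≥ 0` and `B″ ≥ 0`,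
then `∂_{zz}G(t,z) = B″(z)ϱ(t,z) − 2(B′(z))²ϱ(t,z)²∂_t ϱ(t,z) ≥ 0`. -/
theorem stmt_15 (γ : ℝ) (hγ : 1 < γ)
    (h : ℝ → ℝ) (hh : ∀ ρ : ℝ, h ρ = ρ ^ (γ - 1) / (γ - 1))
    (ρc ρm tc : ℝ → ℝ)
    (hρc : ∀ s : ℝ, ρc s = (2 * (γ - 1) / (γ + 1) * s) ^ (1 / (γ - 1)))
    (hρm : ∀ s : ℝ, ρm s = ((γ - 1) * s) ^ (1 / (γ - 1)))
    (htc : ∀ s : ℝ, tc s = 2 * ρc s ^ 2 * (s - h (ρc s)))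
    (a b : ℝ) (B B' B'' : ℝ → ℝ)
    (hBpos : ∀ z ∈ Ioo a b, 0 < B z)
    (hB : ∀ z ∈ Ioo a b, HasDerivAt B (B' z) z)
    (hB' : ∀ z ∈ Ioo a b, HasDerivAt B' (B'' z) z)
    (hB'nonneg : ∀ z ∈ Ioo a b, 0 ≤ B' z)
    (hB''nonneg : ∀ z ∈ Ioo a b, 0 ≤ B'' z)
    (Q : ℝ) (hQ : Q ∈ Ioo a b)
    (ϱ ϱt : ℝ → ℝ → ℝ)
    (hbranch : ∀ z ∈ Ioo a b, ∀ τ ∈ Ico (0 : ℝ) (tc (B z)),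
      ϱ τ z ∈ Ioc (ρc (B z)) (ρm (B z)) ∧ 2 * (ϱ τ z) ^ 2 * (B z - h (ϱ τ z)) = τ)
    (hϱt : ∀ z ∈ Ioo a b, ∀ τ ∈ Ico (0 : ℝ) (tc (B z)),
      HasDerivWithinAt (fun σ => ϱ σ z) (ϱt τ z) (Ico 0 (tc (B z))) τ)
    (G Gz Gzz : ℝ → ℝ → ℝ)
    (hG : ∀ τ z : ℝ, G τ z = (1 / 2) * (∫ σ in (0 : ℝ)..τ, (ϱ σ z)⁻¹)
        + (1 / γ) * ((ϱ 0 z) ^ γ - (ϱ 0 Q) ^ γ))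
    (hGz : ∀ z ∈ Ioo a b, ∀ τ ∈ Ico (0 : ℝ) (tc (B z)),
      HasDerivAt (fun w => G τ w) (Gz τ z) z)
    (hGzz : ∀ z ∈ Ioo a b, ∀ τ ∈ Ico (0 : ℝ) (tc (B z)),
      HasDerivAt (fun w => Gz τ w) (Gzz τ z) z) :
    ∀ z ∈ Ioo a b, ∀ τ ∈ Ico (0 : ℝ) (tc (B z)),
      Gzz τ z = B'' z * ϱ τ z - 2 * (B' z) ^ 2 * (ϱ τ z) ^ 2 * ϱt τ z ∧
      0 ≤ Gzz τ z := by
  have h1 : (0:ℝ) < γ - 1 := by linarith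
  have hγ0 : (0:ℝ) < γ := by linarith
  have hγne : γ - 1 ≠ 0 := ne_of_gt h1
  -- continuity of tc
  have hρc_cont : Continuous ρc := by
    rw [funext hρc]
    exact continuous_iff_continuousAt.2 fun x =>
      (Real.continuousAt_rpow_const _ _ (Or.inr (le_of_lt (by positivity)))).comp
        ((continuous_const.mul continuous_id).continuousAt)
  have hh_cont : Continuous h := by
    rw [funext hh]
    exact (continuous_iff_continuousAt.2 fun x =>
      Real.continuousAt_rpow_const _ _ (Or.inr (le_of_lt h1))).div_const _
  have htc_cont : Continuous tc := by
    rw [funext htc]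
    exact (continuous_const.mul (hρc_cont.pow 2)).mul
      (continuous_id.sub (hh_cont.comp hρc_cont))
  -- eventual membership
  have EV : ∀ z' ∈ Ioo a b, ∀ σ : ℝ, σ < tc (B z') →
      ∀ᶠ w in 𝓝 z', w ∈ Ioo a b ∧ σ < tc (B w) := by
    intro z' hz' σ hσ
    have h2 : ContinuousAt (fun w => tc (B w)) z' :=
      htc_cont.continuousAt.comp (hB z' hz').continuousAt
    exact (isOpen_Ioo.eventually_mem hz').and
      (h2.eventually (eventually_gt_nhds hσ))
  -- branch facts
  have KEY : ∀ w ∈ Ioo a b, ∀ σ ∈ Ico (0:ℝ) (tc (B w)),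
      0 < ϱ σ w ∧ σ < (ϱ σ w)^(γ-1)*(ϱ σ w)^2 ∧
        2*(ϱ σ w)^2*(B w - (ϱ σ w)^(γ-1)/(γ-1)) = σ := by
    intro w hw σ hσ
    obtain ⟨⟨hgt, _⟩, heqw⟩ := hbranch w hw σ hσ
    rw [hh] at heqw
    rw [hρc] at hgt
    obtain ⟨hpos', hlt'⟩ := stmt15_facts hγ (hBpos w hw) hσ.1 hgt heqw
    exact ⟨hpos', hlt', heqw⟩
  -- derivative identity in t
  have TD : ∀ z' ∈ Ioo a b, ∀ σ ∈ Ico (0:ℝ) (tc (B z')),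
      ((2*σ - 2*((ϱ σ z')^(γ-1)*(ϱ σ z')^2))/(ϱ σ z')) * ϱt σ z' = 1 := by
    intro z' hz' σ hσ
    exact stmt15_td (rt := fun t => ϱt t z') hγ hσ (hϱt z' hz' σ hσ)
      (fun t ht => (KEY z' hz' t ht).2.2) (KEY z' hz' σ hσ).1
  have TNEG : ∀ z' ∈ Ioo a b, ∀ σ ∈ Ico (0:ℝ) (tc (B z')), ϱt σ z' < 0 := by
    intro z' hz' σ hσ
    obtain ⟨hp, hl, _⟩ := KEY z' hz' σ hσ
    have td := TD z' hz' σ hσ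
    by_contra hcon
    push_neg at hcon
    have hD : (2*σ - 2*((ϱ σ z')^(γ-1)*(ϱ σ z')^2))/(ϱ σ z') < 0 :=
      div_neg_of_neg_of_pos (by linarith) hp
    nlinarith
  -- z-derivative of the branch
  have RHO : ∀ z' ∈ Ioo a b, ∀ σ ∈ Ico (0:ℝ) (tc (B z')),
      HasDerivAt (fun w => ϱ σ w) (-(2*(ϱ σ z')^2*B' z'*ϱt σ z')) z' := by
    intro z' hz' σ hσ
    have hev : ∀ᶠ w in 𝓝 z',
        0 < ϱ σ w ∧ σ < (ϱ σ w)^(γ-1)*(ϱ σ w)^2 ∧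
          2*(ϱ σ w)^2*(B w - (ϱ σ w)^(γ-1)/(γ-1)) = σ := by
      filter_upwards [EV z' hz' σ hσ.2] with w hw
      exact KEY w hw.1 σ ⟨hσ.1, hw.2⟩
    have h0 := stmt15_hasDerivAt_rho hγ B B' ϱ σ hσ.1 z' (hB z' hz') hev
    convert h0 using 1
    obtain ⟨hρ0, hlt0, _⟩ := KEY z' hz' σ hσ
    have td := TD z' hz' σ hσ
    have hne2 : 2*σ - 2*((ϱ σ z')^(γ-1)*(ϱ σ z')^2) ≠ 0 := by nlinarith
    have hne3 : (ϱ σ z')^(γ-1)*(ϱ σ z')^2 - σ ≠ 0 := by nlinarith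
    have hrteq : ϱt σ z' = (ϱ σ z')/(2*σ - 2*((ϱ σ z')^(γ-1)*(ϱ σ z')^2)) := by
      rw [eq_div_iff hne2]
      field_simp at td
      linarith
    rw [hrteq, inv_div, show 2*σ - 2*((ϱ σ z')^(γ-1)*(ϱ σ z')^2) = -2*((ϱ σ z')^(γ-1)*(ϱ σ z')^2 - σ) by ring]
    field_simp
  -- value of Gz
  have GzVAL : ∀ z' ∈ Ioo a b, ∀ σ ∈ Ico (0:ℝ) (tc (B z')), Gz σ z' = B' z' * ϱ σ z' := by
    intro z' hz' σ hσ
    have h0mem : (0:ℝ) ∈ Ico (0:ℝ) (tc (B z')) := ⟨le_refl 0, lt_of_le_of_lt hσ.1 hσ.2⟩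
    obtain ⟨hp1, hl1, he1⟩ := KEY z' hz' σ hσ
    obtain ⟨hp0, hl0, he0⟩ := KEY z' hz' 0 h0mem
    have hρd1 := RHO z' hz' σ hσ
    have hρd0 := RHO z' hz' 0 h0mem
    have hpow1 := (Real.hasDerivAt_rpow_const (x := ϱ σ z') (p := γ)
      (Or.inl (ne_of_gt hp1))).comp z' hρd1
    have hpow0 := (Real.hasDerivAt_rpow_const (x := ϱ 0 z') (p := γ)
      (Or.inl (ne_of_gt hp0))).comp z' hρd0
    have hA1 := (((hB z' hz').const_mul (4:ℝ)).mul hρd1).sub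
      (hpow1.const_mul (2*(γ+1)/((γ-1)*γ)))
    have hA0 := (((hB z' hz').const_mul (4:ℝ)).mul hρd0).sub
      (hpow0.const_mul (2*(γ+1)/((γ-1)*γ)))
    have hΦ := ((hA1.sub hA0).const_mul ((1:ℝ)/2)).add
      ((hpow0.sub (hasDerivAt_const z' ((ϱ 0 Q)^γ))).const_mul ((1:ℝ)/γ))
    have hGΦ : (fun w => G σ w) =ᶠ[𝓝 z']
        (fun w => (1/2) * ((4*B w*(ϱ σ w) - 2*(γ+1)/((γ-1)*γ)*(ϱ σ w)^γ)
            - (4*B w*(ϱ 0 w) - 2*(γ+1)/((γ-1)*γ)*(ϱ 0 w)^γ))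
          + (1/γ) * ((ϱ 0 w)^γ - (ϱ 0 Q)^γ)) := by
      filter_upwards [EV z' hz' σ hσ.2] with w hw
      have hmem : σ ∈ Ico (0:ℝ) (tc (B w)) := ⟨hσ.1, hw.2⟩
      rw [hG σ w, stmt15_ftc (rt := fun t => ϱt t w) hγ hmem (hϱt w hw.1)
        (fun t ht => (KEY w hw.1 t ht).2.2) (fun t ht => (KEY w hw.1 t ht).1)
        (fun t ht => (KEY w hw.1 t ht).2.1)]
    have hDD := (hGz z' hz' σ hσ).unique (hΦ.congr_of_eventuallyEq hGΦ)
    rw [hDD]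
    -- algebra
    have td1 := TD z' hz' σ hσ
    have td0 := TD z' hz' 0 h0mem
    have hρ1ne : ϱ σ z' ≠ 0 := ne_of_gt hp1
    have hρ0ne : ϱ 0 z' ≠ 0 := ne_of_gt hp0
    have hρ1sq : (ϱ σ z')^2 ≠ 0 := pow_ne_zero 2 hρ1ne
    have hρ0sq : (ϱ 0 z')^2 ≠ 0 := pow_ne_zero 2 hρ0ne
    have hD1t : (2*σ - 2*((ϱ σ z')^(γ-1)*(ϱ σ z')^2)) * ϱt σ z' = ϱ σ z' := by
      field_simp at td1; linarith
    have hD0t : (2*0 - 2*((ϱ 0 z')^(γ-1)*(ϱ 0 z')^2)) * ϱt 0 z' = ϱ 0 z' := by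
      field_simp at td0; linarith
    have he1'' : B z'*((γ-1)*(2*(ϱ σ z')^2)) = (ϱ σ z')^(γ-1)*(2*(ϱ σ z')^2) + σ*(γ-1) := by
      field_simp at he1; linarith
    have hs0 : B z' = (ϱ 0 z')^(γ-1)/(γ-1) := by
      have hq : (ϱ 0 z')^2 ≠ 0 := by positivity
      field_simp at he0 ⊢
      nlinarith [he0, pow_pos hp0 2]
    have hX1 : 4*B z' - 2*(γ+1)/((γ-1)*γ)*(γ*(ϱ σ z')^(γ-1))
        = (2*σ - 2*((ϱ σ z')^(γ-1)*(ϱ σ z')^2))/(ϱ σ z')^2 := by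
      rw [eq_div_iff hρ1sq]; field_simp; linear_combination 2*he1''
    have hX0 : 4*B z' - 2*(γ+1)/((γ-1)*γ)*(γ*(ϱ 0 z')^(γ-1))
        = (2*0 - 2*((ϱ 0 z')^(γ-1)*(ϱ 0 z')^2))/(ϱ 0 z')^2 := by
      rw [hs0]; field_simp; ring
    have E1 : 4*B z' * (-(2*(ϱ σ z')^2*B' z'*ϱt σ z'))
        - 2*(γ+1)/((γ-1)*γ)*(γ*(ϱ σ z')^(γ-1)*(-(2*(ϱ σ z')^2*B' z'*ϱt σ z')))
        = -2*B' z'*(ϱ σ z') := by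
      have h4 : 4*B z' * (-(2*(ϱ σ z')^2*B' z'*ϱt σ z'))
          - 2*(γ+1)/((γ-1)*γ)*(γ*(ϱ σ z')^(γ-1)*(-(2*(ϱ σ z')^2*B' z'*ϱt σ z')))
          = ((2*σ - 2*((ϱ σ z')^(γ-1)*(ϱ σ z')^2))/(ϱ σ z')^2)
              * (-(2*(ϱ σ z')^2*B' z'*ϱt σ z')) := by
        rw [← hX1]; ring
      rw [h4, div_mul_eq_mul_div, div_eq_iff hρ1sq]
      linear_combination (-2*B' z'*(ϱ σ z')^2)*hD1t
    have E0 : 4*B z' * (-(2*(ϱ 0 z')^2*B' z'*ϱt 0 z'))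
        - 2*(γ+1)/((γ-1)*γ)*(γ*(ϱ 0 z')^(γ-1)*(-(2*(ϱ 0 z')^2*B' z'*ϱt 0 z')))
        = -2*B' z'*(ϱ 0 z') := by
      have h4 : 4*B z' * (-(2*(ϱ 0 z')^2*B' z'*ϱt 0 z'))
          - 2*(γ+1)/((γ-1)*γ)*(γ*(ϱ 0 z')^(γ-1)*(-(2*(ϱ 0 z')^2*B' z'*ϱt 0 z')))
          = ((2*0 - 2*((ϱ 0 z')^(γ-1)*(ϱ 0 z')^2))/(ϱ 0 z')^2)
              * (-(2*(ϱ 0 z')^2*B' z'*ϱt 0 z')) := by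
        rw [← hX0]; ring
      rw [h4, div_mul_eq_mul_div, div_eq_iff hρ0sq]
      linear_combination (-2*B' z'*(ϱ 0 z')^2)*hD0t
    have L0 : (ϱ 0 z')^(γ-1) * (-(2*(ϱ 0 z')^2*B' z'*ϱt 0 z')) = B' z'*(ϱ 0 z') := by
      linear_combination B' z' * hD0t
    have hγinv : (1/γ)*γ = 1 := by field_simp
    linear_combination (1/2)*E1 - (1/2)*E0 + L0
      + ((ϱ 0 z')^(γ-1)*(-(2*(ϱ 0 z')^2*B' z'*ϱt 0 z')))*hγinv
  -- final assembly
  intro z hz τ hτ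
  have hGzev : (fun w => Gz τ w) =ᶠ[𝓝 z] (fun w => B' w * ϱ τ w) := by
    filter_upwards [EV z hz τ hτ.2] with w hw
    exact GzVAL w hw.1 τ ⟨hτ.1, hw.2⟩
  have hd2 := (hB' z hz).mul (RHO z hz τ hτ)
  have hval := (hGzz z hz τ hτ).unique (hd2.congr_of_eventuallyEq hGzev)
  have hρpos := (KEY z hz τ hτ).1
  have htneg := TNEG z hz τ hτ
  constructor
  · rw [hval]; ring
  · rw [hval]
    have hb2 : 0 ≤ B'' z * ϱ τ z := mul_nonneg (hB''nonneg z hz) hρpos.le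
    have hb3 : 0 ≤ -(ϱt τ z) * ((B' z)^2 * (2 * (ϱ τ z)^2)) :=
      mul_nonneg (by linarith) (by positivity)
    nlinarith [hb2, hb3]
end

section
/- Let g > 0, a ≥ 0, b ∈ ℝ, c_B ≥ 0 (representing respectively g(t,z), ∂_t g(t,z) ≥ 0, B′(z) with B′ ≥ 0, and B″(z) ≥ 0 of the paper), let y > 0, p ∈ ℝ², and set t = |p|². Define the 2×2 matrix A = g·I₂ + 2a·p pᵀ, the vector w = (−2b·a/g²)·p (which equals ∂_z g·p by the identity g²∂_z g = −2B′∂_t g), and the scalar c = c_B/g + 2b²·a/g⁴. Then the 3×3 matrix M = [[A, y·w], [wᵀ, y·c]] (with A in the upper-left 2×2 block, y·w as the last column's first two entries, wᵀ as the last row's first two entries, and y·c in the lower-right corner) has nonnegative determinant: det M ≥ 0. -/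
/-- the structural determinant condition. For `g > 0`, `a ≥ 0`, `b ∈ ℝ`,
`c_B ≥ 0`, `y > 0` and `p ∈ ℝ²`, the 3×3 matrix
`M = [[g I₂ + 2a p pᵀ, y·w],[wᵀ, y·c]]` with `w = (−2ba/g²)p` and `c = c_B/g + 2b²a/g⁴`
has nonnegative determinant. -/
theorem stmt_16 (g a b cB y : ℝ) (p : ℝ × ℝ)
    (hg : 0 < g) (ha : 0 ≤ a) (hcB : 0 ≤ cB) (hy : 0 < y) :
    0 ≤ (!![g + 2 * a * p.1 ^ 2, 2 * a * p.1 * p.2, y * (-2 * b * a / g ^ 2 * p.1);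
            2 * a * p.2 * p.1, g + 2 * a * p.2 ^ 2, y * (-2 * b * a / g ^ 2 * p.2);
            -2 * b * a / g ^ 2 * p.1, -2 * b * a / g ^ 2 * p.2,
              y * (cB / g + 2 * b ^ 2 * a / g ^ 4)] : Matrix (Fin 3) (Fin 3) ℝ).det := by
  have hg' : g ≠ 0 := ne_of_gt hg
  rw [Matrix.det_fin_three]
  simp only [Matrix.of_apply, Matrix.cons_val', Matrix.cons_val_zero, Matrix.empty_val',
    Matrix.cons_val_fin_one, Matrix.cons_val_one, Matrix.head_cons, Matrix.head_fin_const,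
    Matrix.cons_val_two, Matrix.tail_cons]
  have h : (g + 2 * a * p.1 ^ 2) * (g + 2 * a * p.2 ^ 2) * (y * (cB / g + 2 * b ^ 2 * a / g ^ 4)) -
      (g + 2 * a * p.1 ^ 2) * (y * (-2 * b * a / g ^ 2 * p.2)) * (-2 * b * a / g ^ 2 * p.2) -
      2 * a * p.1 * p.2 * (2 * a * p.2 * p.1) * (y * (cB / g + 2 * b ^ 2 * a / g ^ 4)) +
      2 * a * p.1 * p.2 * (y * (-2 * b * a / g ^ 2 * p.2)) * (-2 * b * a / g ^ 2 * p.1) +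
      y * (-2 * b * a / g ^ 2 * p.1) * (2 * a * p.2 * p.1) * (-2 * b * a / g ^ 2 * p.2) -
      y * (-2 * b * a / g ^ 2 * p.1) * (g + 2 * a * p.2 ^ 2) * (-2 * b * a / g ^ 2 * p.1) =
      y * (cB * (g + 2 * a * (p.1 ^ 2 + p.2 ^ 2)) + 2 * b ^ 2 * a / g ^ 2) := by
    field_simp
    ring
  rw [h]
  positivity
end
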